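/- arXiv:1803.02046 — 7 statements merged into one kernel-verified Lean document; each statement's English description precedes it below -/
import Mathlib

section
/- Let A be a unital algebra over ℂ, M a unital A-bimodule, and m, n positive integers with m ≠ n. If δ : A → M is an additive map with δ(1) = 0 such that (m+n)·δ(XY+YX) = 2m·δ(X)·Y + 2m·δ(Y)·X + 2n·X·δ(Y) + 2n·Y·δ(X) whenever XY = YX = 0, then δ(P) = 0 for every idempotent P in A. -/
/-!
Put `Q = 1 - P`. Since `PQ = QP = 0`, the hypothesis applies to `(P, Q)`; as `δ 0 = 0` and
`δ Q = -δ P`, it becomes `(m + n) δP = 2m δP·P + 2n P·δP`. Multiplying this relation by `P` on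
the left and/or on the right kills, in turn, `P·δP·P`, `P·δP`, `δP·P` and finally `δP`, because
`m ≠ n` makes each coefficient comparison nontrivial.
-/

open MulOpposite

lemma eq_zero_of_nsmul_eq_nsmul {M : Type*} [AddCommGroup M] [IsAddTorsionFree M]
    {j k : ℕ} (hjk : j ≠ k) {x : M} (h : j • x = k • x) : x = 0 := by
  by_contra hx
  have hz : (j : ℤ) • x = (k : ℤ) • x := by simpa only [natCast_zsmul] using h
  exact hjk (by exact_mod_cast (smul_left_inj hx).1 hz)

lemma nsmul_add_nsmul_smul_comm {R M : Type*} [Monoid R] [AddCommMonoid M]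
    [DistribMulAction R M] (r : R) {j k l : ℕ} {x y z : M} (h : j • x = k • y + l • z) :
    j • (r • x) = k • (r • y) + l • (r • z) := by
  rw [smul_comm, h, smul_add, smul_comm r k, smul_comm r l]

section Bimodule

variable {R M : Type*} [Ring R] [AddCommGroup M] [Module R M] [Module Rᵐᵒᵖ M]
  [SMulCommClass R Rᵐᵒᵖ M] [IsAddTorsionFree M]

lemma IsIdempotentElem.eq_zero_of_nsmul_eq {P : R} (hP : IsIdempotentElem P) {m n : ℕ}
    (hmn : m ≠ n) {x : M}
    (h : (m + n) • x = (2 * m) • (op P • x) + (2 * n) • (P • x)) : x = 0 := by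
  have hleft : P • P • x = P • x := by rw [smul_smul, hP.eq]
  have hright : ∀ y : M, op P • op P • y = op P • y := fun y => by
    rw [smul_smul, ← op_mul, hP.eq]
  have hPx : (m + n) • (P • x) = (2 * m) • (op P • P • x) + (2 * n) • (P • x) := by
    simpa only [smul_comm P (op P), hleft] using nsmul_add_nsmul_smul_comm P h
  have hPxP : op P • P • x = 0 := by
    have h := nsmul_add_nsmul_smul_comm (op P) hPx
    rw [hright] at h
    exact eq_zero_of_nsmul_eq_nsmul (by omega) (h.trans (add_nsmul _ _ _).symm)
  have hPx0 : P • x = 0 := by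
    refine eq_zero_of_nsmul_eq_nsmul (j := m + n) (k := 2 * n) (by omega) ?_
    simpa only [hPxP, smul_zero, zero_add] using hPx
  have hxP0 : op P • x = 0 := by
    refine eq_zero_of_nsmul_eq_nsmul (j := m + n) (k := 2 * m) (by omega) ?_
    simpa only [hright, hPxP, smul_zero, add_zero] using nsmul_add_nsmul_smul_comm (op P) h
  refine eq_zero_of_nsmul_eq_nsmul (j := m + n) (k := 0) (by omega) ?_
  rw [h, hPx0, hxP0, smul_zero, smul_zero, add_zero, zero_smul]

end Bimodule

theorem mn_jordan_derivable_at_zero_idempotent_general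
    {A M : Type*} [Ring A]
    [AddCommGroup M] [Module ℂ M] [Module A M] [Module Aᵐᵒᵖ M]
    [SMulCommClass A Aᵐᵒᵖ M]
    (m n : ℕ) (hmn : m ≠ n)
    (δ : A → M) (hadd : ∀ a b : A, δ (a + b) = δ a + δ b)
    (hδ1 : δ 1 = 0)
    (hzero : ∀ X Y : A, X * Y = 0 → Y * X = 0 →
      (m + n) • δ (X * Y + Y * X) =
        (2 * m) • (op Y • δ X) + (2 * m) • (op X • δ Y)
          + (2 * n) • (X • δ Y) + (2 * n) • (Y • δ X))
    (P : A) (hP : P * P = P) :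
    δ P = 0 := by
  have := IsAddTorsionFree.of_isTorsionFree ℂ M
  have hPi : IsIdempotentElem P := hP
  let D : A →+ M := AddMonoidHom.mk' δ hadd
  have hδ0 : δ 0 = 0 := D.map_zero
  have hδQ : δ (1 - P) = -δ P := by
    rw [show δ (1 - P) = δ 1 - δ P from D.map_sub 1 P, hδ1, zero_sub]
  have hPQ := hzero P (1 - P) hPi.mul_one_sub_self hPi.one_sub_mul_self
  rw [hPi.mul_one_sub_self, hPi.one_sub_mul_self, add_zero, hδ0, smul_zero, hδQ] at hPQ
  refine hPi.eq_zero_of_nsmul_eq hmn ((nsmul_right_inj two_ne_zero).1 ?_)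
  simp only [op_sub, op_one, sub_smul, one_smul, smul_neg, smul_sub] at hPQ
  -- `module` cannot mix the `A`- and `Aᵐᵒᵖ`-actions, so their values become atoms.
  generalize P • δ P = a at hPQ ⊢
  generalize op P • δ P = b at hPQ ⊢
  linear_combination (norm := module) -hPQ

/-- An `(m,n)`-Jordan derivable mapping at zero with `δ 1 = 0`
vanishes on idempotents. -/
theorem mn_jordan_derivable_at_zero_idempotent
    {A M : Type*} [Ring A] [Algebra ℂ A]
    [AddCommGroup M] [Module ℂ M] [Module A M] [Module Aᵐᵒᵖ M]
    [SMulCommClass A Aᵐᵒᵖ M]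
    (m n : ℕ) (hm : 0 < m) (hn : 0 < n) (hmn : m ≠ n)
    (δ : A → M) (hadd : ∀ a b : A, δ (a + b) = δ a + δ b)
    (hδ1 : δ 1 = 0)
    (hzero : ∀ X Y : A, X * Y = 0 → Y * X = 0 →
      (m + n) • δ (X * Y + Y * X) =
        (2 * m) • (op Y • δ X) + (2 * m) • (op X • δ Y)
          + (2 * n) • (X • δ Y) + (2 * n) • (Y • δ X))
    (P : A) (hP : P * P = P) :
    δ P = 0 :=
  mn_jordan_derivable_at_zero_idempotent_general m n hmn δ hadd hδ1 hzero P hP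
end

section
/- Let A be a unital algebra over ℂ, M a unital A-bimodule, and m, n positive integers with m ≠ n. If δ : A → M is an (m,n)-Jordan derivable mapping at zero with δ(1) = 0, then for every A ∈ A and every idempotent P ∈ A, δ(PA) = δ(AP) = δ(A)·P = P·δ(A). -/
/-! With `Q = 1 - P`, the zero-product pair `(P, Q)` gives `(m+n) δP = 2m δP·P + 2n P·δP`.
Projecting onto the four Peirce components of `δP` (for the commuting idempotents "left and right
multiplication by `P`") multiplies each of them by one of `m+n`, `n-m`, `m-n`, `-(m+n)`, so `δP = 0`
for every idempotent `P`. As `P + PaQ` and `P + QaP` are idempotent too, `δ` vanishes on the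
off-diagonal corners, whence `δ(Pa) = δ(aP) = δ(PaP)`. Finally the pairs `(Q, PaP)` and `(P, QaQ)`
show that both actions of `P` fix `δ(PaP)` and kill `δ(QaQ)`, and `δa = δ(PaP) + δ(QaQ)`. -/

open MulOpposite

namespace AddMonoid.End

variable {M : Type*} [AddCommGroup M] {L R : AddMonoid.End M}

/-- `L (R v)`, `R v - L (R v)`, `L v - L (R v)` and `v - L v - R v + L (R v)` are the components of
`v` on which `(L, R)` act as `(1, 1)`, `(0, 1)`, `(1, 0)` and `(0, 0)`. -/
theorem peirce_smul_eq_zero (hL : IsIdempotentElem L) (hR : IsIdempotentElem R)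
    (hLR : Commute L R) {α β γ : ℤ} {v : M} (h : α • v = β • R v + γ • L v) :
    (α - β - γ) • L (R v) = 0 ∧ (α - β) • (R v - L (R v)) = 0 ∧
      (α - γ) • (L v - L (R v)) = 0 ∧ α • (v - L v - R v + L (R v)) = 0 := by
  have hLL (w : M) : L (L w) = L w := congr($hL w)
  have hRR (w : M) : R (R w) = R w := congr($hR w)
  have hRL : R (L v) = L (R v) := congr($hLR.eq.symm v)
  have hRh : α • R v = β • R v + γ • L (R v) := by
    simpa only [map_add, map_zsmul, hRR, hRL] using congr(R $h)
  have hLh : α • L v = β • L (R v) + γ • L v := by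
    simpa only [map_add, map_zsmul, hLL] using congr(L $h)
  have hLRh : α • L (R v) = β • L (R v) + γ • L (R v) := by
    simpa only [map_add, map_zsmul, hLL] using congr(L $hRh)
  refine ⟨?_, ?_, ?_, ?_⟩
  · linear_combination (norm := module) hLRh
  · linear_combination (norm := module) hRh - hLRh
  · linear_combination (norm := module) hLh - hLRh
  · linear_combination (norm := module) h - hLh - hRh + hLRh

variable [IsAddTorsionFree M]

theorem eq_zero_of_smul_eq (hL : IsIdempotentElem L) (hR : IsIdempotentElem R)
    (hLR : Commute L R) {α β γ : ℤ} (hα : α ≠ 0) (hβ : α - β ≠ 0) (hγ : α - γ ≠ 0)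
    (hβγ : α - β - γ ≠ 0) {v : M} (h : α • v = β • R v + γ • L v) : v = 0 := by
  obtain ⟨h₁₁, h₁₀, h₀₁, h₀₀⟩ := peirce_smul_eq_zero hL hR hLR h
  rw [smul_eq_zero_iff_right hβγ] at h₁₁
  rw [smul_eq_zero_iff_right hβ] at h₁₀
  rw [smul_eq_zero_iff_right hγ] at h₀₁
  rw [smul_eq_zero_iff_right hα] at h₀₀
  linear_combination (norm := module) h₀₀ + h₁₀ + h₀₁ + h₁₁

theorem apply_eq_zero_of_smul_add_smul_eq_zero (hL : IsIdempotentElem L)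
    (hR : IsIdempotentElem R) (hLR : Commute L R) {m n : ℤ} (hm : m ≠ 0) (hn : n ≠ 0)
    (hmn : m + n ≠ 0) {v : M} (h : m • R v + n • L v = 0) : R v = 0 ∧ L v = 0 := by
  obtain ⟨h₁₁, h₁₀, h₀₁, -⟩ := peirce_smul_eq_zero hL hR hLR (by rw [zero_smul, h])
  rw [smul_eq_zero_iff_right (by omega)] at h₁₁ h₁₀ h₀₁
  rw [h₁₁, sub_zero] at h₁₀ h₀₁
  exact ⟨h₁₀, h₀₁⟩

end AddMonoid.End

theorem DistribMulAction.commute_toAddMonoidEnd {R S M : Type*} [Monoid R] [Monoid S]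
    [AddMonoid M] [DistribMulAction R M] [DistribMulAction S M] [SMulCommClass R S M]
    (r : R) (s : S) : Commute (toAddMonoidEnd R M r) (toAddMonoidEnd S M s) :=
  AddMonoidHom.ext fun v => smul_comm r s v

theorem isIdempotentElem_op {R : Type*} [Mul R] {P : R} (hP : IsIdempotentElem P) :
    IsIdempotentElem (op P) :=
  congrArg op hP

section

variable {A : Type*} [Ring A]

namespace IsIdempotentElem

variable {P : A}

theorem add_mul_mul_one_sub (hP : IsIdempotentElem P) (a : A) :
    IsIdempotentElem (P + P * a * (1 - P)) := by
  calc (P + P * a * (1 - P)) * (P + P * a * (1 - P))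
      = P * P + P * P * a * (1 - P) + P * a * ((1 - P) * P)
        + P * a * ((1 - P) * P) * a * (1 - P) := by noncomm_ring
    _ = P + P * a * (1 - P) := by simp [hP.eq, hP.one_sub_mul_self]

theorem add_one_sub_mul_mul (hP : IsIdempotentElem P) (a : A) :
    IsIdempotentElem (P + (1 - P) * a * P) := by
  calc (P + (1 - P) * a * P) * (P + (1 - P) * a * P)
      = P * P + P * (1 - P) * a * P + (1 - P) * a * (P * P)
        + (1 - P) * a * (P * (1 - P)) * a * P := by noncomm_ring
    _ = P + (1 - P) * a * P := by simp [hP.eq, hP.mul_one_sub_self]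

theorem mul_one_sub_mul_mul_one_sub (hP : IsIdempotentElem P) (a : A) :
    P * ((1 - P) * a * (1 - P)) = 0 := by
  rw [← mul_assoc, ← mul_assoc, hP.mul_one_sub_self, zero_mul, zero_mul]

theorem one_sub_mul_mul_one_sub_mul (hP : IsIdempotentElem P) (a : A) :
    (1 - P) * a * (1 - P) * P = 0 := by
  rw [mul_assoc, hP.one_sub_mul_self, mul_zero]

end IsIdempotentElem

variable {M : Type*} [AddCommGroup M] [Module A M] [Module Aᵐᵒᵖ M]

def IsJordanDerivableAtZero (m n : ℕ) (δ : A →+ M) : Prop :=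
  ∀ X Y : A, X * Y = 0 → Y * X = 0 →
    (m + n) • δ (X * Y + Y * X) =
      (2 * m) • (op Y • δ X) + (2 * m) • (op X • δ Y) + (2 * n) • (X • δ Y) + (2 * n) • (Y • δ X)

theorem IsJordanDerivableAtZero.smul_add_smul_eq_zero [IsAddTorsionFree M] {m n : ℕ}
    {δ : A →+ M} (hδ : IsJordanDerivableAtZero m n δ) {X Y : A} (hXY : X * Y = 0)
    (hYX : Y * X = 0) :
    (m : ℤ) • (op Y • δ X + op X • δ Y) + (n : ℤ) • (X • δ Y + Y • δ X) = 0 := by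
  have h := hδ X Y hXY hYX
  rw [hXY, hYX, add_zero, map_zero, smul_zero] at h
  refine nsmul_right_injective (M := M) two_ne_zero ?_
  simpa only [natCast_zsmul, smul_zero, smul_add, smul_smul, add_assoc] using h.symm

variable [SMulCommClass A Aᵐᵒᵖ M] [IsAddTorsionFree M]

namespace IsIdempotentElem

variable {P : A}

theorem eq_zero_of_add_smul_eq (hP : IsIdempotentElem P) {m n : ℤ} (hmn : m ≠ n)
    (hmn' : m + n ≠ 0) {v : M}
    (h : (m + n) • v = (2 * m) • (op P • v) + (2 * n) • (P • v)) : v = 0 :=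
  AddMonoid.End.eq_zero_of_smul_eq (α := m + n) (β := 2 * m) (γ := 2 * n)
    (hP.map (DistribMulAction.toAddMonoidEnd A M))
    ((isIdempotentElem_op hP).map (DistribMulAction.toAddMonoidEnd Aᵐᵒᵖ M))
    (DistribMulAction.commute_toAddMonoidEnd P (op P)) hmn' (by omega) (by omega) (by omega) h

theorem smul_eq_zero_of_smul_add_smul_eq_zero (hP : IsIdempotentElem P) {m n : ℤ}
    (hm : m ≠ 0) (hn : n ≠ 0) (hmn : m + n ≠ 0) {v : M}
    (h : m • (op P • v) + n • (P • v) = 0) : op P • v = 0 ∧ P • v = 0 :=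
  AddMonoid.End.apply_eq_zero_of_smul_add_smul_eq_zero
    (hP.map (DistribMulAction.toAddMonoidEnd A M))
    ((isIdempotentElem_op hP).map (DistribMulAction.toAddMonoidEnd Aᵐᵒᵖ M))
    (DistribMulAction.commute_toAddMonoidEnd P (op P)) hm hn hmn h

end IsIdempotentElem

namespace IsJordanDerivableAtZero

variable {m n : ℕ} {δ : A →+ M} {P : A}

theorem map_eq_zero_of_isIdempotentElem (hδ : IsJordanDerivableAtZero m n δ) (hm : 0 < m)
    (hn : 0 < n) (hmn : m ≠ n) (hδ1 : δ 1 = 0) (hP : IsIdempotentElem P) : δ P = 0 := by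
  have h := hδ.smul_add_smul_eq_zero hP.mul_one_sub_self hP.one_sub_mul_self
  rw [map_sub, hδ1, zero_sub] at h
  simp only [op_sub, op_one, sub_smul, one_smul, smul_neg] at h
  refine hP.eq_zero_of_add_smul_eq (m := m) (n := n) (by omega) (by omega) ?_
  generalize op P • δ P = r at h ⊢
  generalize P • δ P = l at h ⊢
  linear_combination (norm := module) h

theorem map_mul_eq_map_mul_mul (hδ : IsJordanDerivableAtZero m n δ) (hm : 0 < m)
    (hn : 0 < n) (hmn : m ≠ n) (hδ1 : δ 1 = 0) (hP : IsIdempotentElem P) (a : A) :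
    δ (P * a) = δ (P * a * P) := by
  have h := hδ.map_eq_zero_of_isIdempotentElem hm hn hmn hδ1 (hP.add_mul_mul_one_sub a)
  rw [map_add, hδ.map_eq_zero_of_isIdempotentElem hm hn hmn hδ1 hP, zero_add] at h
  calc δ (P * a) = δ (P * a * P + P * a * (1 - P)) := by congr 1; noncomm_ring
    _ = δ (P * a * P) := by rw [map_add, h, add_zero]

theorem map_mul_eq_map_mul_mul' (hδ : IsJordanDerivableAtZero m n δ) (hm : 0 < m)
    (hn : 0 < n) (hmn : m ≠ n) (hδ1 : δ 1 = 0) (hP : IsIdempotentElem P) (a : A) :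
    δ (a * P) = δ (P * a * P) := by
  have h := hδ.map_eq_zero_of_isIdempotentElem hm hn hmn hδ1 (hP.add_one_sub_mul_mul a)
  rw [map_add, hδ.map_eq_zero_of_isIdempotentElem hm hn hmn hδ1 hP, zero_add] at h
  calc δ (a * P) = δ (P * a * P + (1 - P) * a * P) := by congr 1; noncomm_ring
    _ = δ (P * a * P) := by rw [map_add, h, add_zero]

theorem smul_map_eq_zero_of_mul_eq_zero (hδ : IsJordanDerivableAtZero m n δ) (hm : 0 < m)
    (hn : 0 < n) (hmn : m ≠ n) (hδ1 : δ 1 = 0) (hP : IsIdempotentElem P) {b : A}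
    (hPb : P * b = 0) (hbP : b * P = 0) : op P • δ b = 0 ∧ P • δ b = 0 := by
  have h := hδ.smul_add_smul_eq_zero hPb hbP
  rw [hδ.map_eq_zero_of_isIdempotentElem hm hn hmn hδ1 hP] at h
  simp only [smul_zero, add_zero, zero_add] at h
  exact hP.smul_eq_zero_of_smul_add_smul_eq_zero (by omega) (by omega) (by omega) h

end IsJordanDerivableAtZero

end

theorem mn_jordan_derivable_at_zero_idempotent_comm_general
    {A M : Type*} [Ring A]
    [AddCommGroup M] [Module ℂ M] [Module A M] [Module Aᵐᵒᵖ M]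
    [SMulCommClass A Aᵐᵒᵖ M]
    (m n : ℕ) (hm : 0 < m) (hn : 0 < n) (hmn : m ≠ n)
    (δ : A → M) (hadd : ∀ a b : A, δ (a + b) = δ a + δ b)
    (hδ1 : δ 1 = 0)
    (hzero : ∀ X Y : A, X * Y = 0 → Y * X = 0 →
      (m + n) • δ (X * Y + Y * X) =
        (2 * m) • (op Y • δ X) + (2 * m) • (op X • δ Y)
          + (2 * n) • (X • δ Y) + (2 * n) • (Y • δ X))
    (P : A) (hP : P * P = P) (a : A) :
    δ (P * a) = δ (a * P) ∧ δ (a * P) = op P • δ a ∧ op P • δ a = P • δ a := by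
  have : IsAddTorsionFree M := .of_isTorsionFree ℂ M
  let D : A →+ M := .mk' δ hadd
  change D (P * a) = D (a * P) ∧ D (a * P) = op P • D a ∧ op P • D a = P • D a
  have hD : IsJordanDerivableAtZero m n D := hzero
  have hP : IsIdempotentElem P := hP
  have hPa := hD.map_mul_eq_map_mul_mul hm hn hmn hδ1 hP a
  have haP := hD.map_mul_eq_map_mul_mul' hm hn hmn hδ1 hP a
  have ha : D a = D (P * a * P) + D ((1 - P) * a * (1 - P)) := by
    calc D a = D (P * a + a * P - P * a * P + (1 - P) * a * (1 - P)) := by congr 1; noncomm_ring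
      _ = _ := by rw [map_add, map_sub, map_add, hPa, haP, add_sub_cancel_right]
  obtain ⟨hRc, hLc⟩ := hD.smul_map_eq_zero_of_mul_eq_zero hm hn hmn hδ1 hP
    (hP.mul_one_sub_mul_mul_one_sub a) (hP.one_sub_mul_mul_one_sub_mul a)
  obtain ⟨hRb, hLb⟩ := hD.smul_map_eq_zero_of_mul_eq_zero hm hn hmn hδ1 hP.one_sub
    (by simpa using hP.one_sub.mul_one_sub_mul_mul_one_sub a)
    (by simpa using hP.one_sub.one_sub_mul_mul_one_sub_mul a)
  rw [op_sub, op_one, sub_smul, one_smul, sub_eq_zero] at hRb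
  rw [sub_smul, one_smul, sub_eq_zero] at hLb
  refine ⟨hPa.trans haP.symm, ?_, ?_⟩
  · rw [haP, ha, smul_add, hRc, add_zero, ← hRb]
  · rw [ha, smul_add, smul_add, hRc, hLc, ← hRb, ← hLb]

/-- For an `(m,n)`-Jordan derivable mapping at zero with `δ 1 = 0`:
`δ(PA) = δ(AP) = δ(A)·P = P·δ(A)` for every idempotent `P`. -/
theorem mn_jordan_derivable_at_zero_idempotent_comm
    {A M : Type*} [Ring A] [Algebra ℂ A]
    [AddCommGroup M] [Module ℂ M] [Module A M] [Module Aᵐᵒᵖ M]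
    [SMulCommClass A Aᵐᵒᵖ M]
    (m n : ℕ) (hm : 0 < m) (hn : 0 < n) (hmn : m ≠ n)
    (δ : A → M) (hadd : ∀ a b : A, δ (a + b) = δ a + δ b)
    (hδ1 : δ 1 = 0)
    (hzero : ∀ X Y : A, X * Y = 0 → Y * X = 0 →
      (m + n) • δ (X * Y + Y * X) =
        (2 * m) • (op Y • δ X) + (2 * m) • (op X • δ Y)
          + (2 * n) • (X • δ Y) + (2 * n) • (Y • δ X))
    (P : A) (hP : P * P = P) (a : A) :
    δ (P * a) = δ (a * P) ∧ δ (a * P) = op P • δ a ∧ op P • δ a = P • δ a :=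
  mn_jordan_derivable_at_zero_idempotent_comm_general m n hm hn hmn δ hadd hδ1 hzero P hP a
end

section
/- Let A be a unital algebra over ℂ, M a unital A-bimodule, and m, n positive integers with m ≠ n. Suppose J is a two-sided ideal of A contained in the subalgebra generated by the idempotents of A, and J is a left separating set of M (i.e., x·J = {0} implies x = 0 for x ∈ M). If δ : A → M is an (m,n)-Jordan derivable mapping at zero with δ(1) = 0, then δ = 0. -/
open MulOpposite

/-- Cancellation of a nonzero integer scalar in a complex vector space. -/
lemma aux_zsmul_cancel {M : Type*} [AddCommGroup M] [Module ℂ M]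
    (k : ℤ) (hk : k ≠ 0) (v : M) (hv : k • v = 0) : v = 0 := by
  have h2 : ((k : ℂ)) • v = 0 := by rw [Int.cast_smul_eq_zsmul]; exact hv
  have hk2 : (k : ℂ) ≠ 0 := Int.cast_ne_zero.mpr hk
  calc v = ((k : ℂ)⁻¹ * (k : ℂ)) • v := by rw [inv_mul_cancel₀ hk2, one_smul]
    _ = 0 := by rw [mul_smul, h2, smul_zero]

/-- Linear algebra behind the vanishing of `δ` on idempotents. -/
lemma aux_idem {M : Type*} [AddCommGroup M] [Module ℂ M] {m n : ℤ}
    (hc1 : 2 * m + 2 * n ≠ 0) (hc2 : 2 * n - 2 * m ≠ 0) (hc3 : 2 * m - 2 * n ≠ 0)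
    (p : M) (φ ψ : M →+ M)
    (hφφ : ∀ z, φ (φ z) = φ z) (hψψ : ∀ z, ψ (ψ z) = ψ z)
    (hcomm : ∀ z, φ (ψ z) = ψ (φ z))
    (hφk : ∀ (k : ℤ) (z : M), φ (k • z) = k • φ z)
    (hψk : ∀ (k : ℤ) (z : M), ψ (k • z) = k • ψ z)
    (E0 : (0 : M) = (2 * m) • (p - φ p) + (2 * m) • (φ (-p))
      + (2 * n) • (ψ (-p)) + (2 * n) • (p - ψ p)) :
    p = 0 := by
  have e1 := congrArg (⇑φ) E0
  simp only [map_zero, map_add, map_sub, map_neg, hφk, hφφ, hcomm] at e1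
  have e2 := congrArg (⇑ψ) E0
  simp only [map_zero, map_add, map_sub, map_neg, hψk, hψψ, hcomm] at e2
  have e3 := congrArg (⇑ψ) e1
  simp only [map_zero, map_add, map_sub, map_neg, hψk, hψψ, hcomm] at e3
  have hw : ψ (φ p) = 0 := aux_zsmul_cancel (2 * m + 2 * n) hc1 _
    (by linear_combination (norm := module) e3)
  have hx : φ p = 0 := aux_zsmul_cancel (2 * n - 2 * m) hc2 _
    (by linear_combination (norm := module) -e1 + (4 * n) • hw)
  have hy : ψ p = 0 := aux_zsmul_cancel (2 * m - 2 * n) hc3 _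
    (by linear_combination (norm := module) -e2 + (4 * m) • hw)
  have E0' := E0
  simp only [map_neg] at E0'
  exact aux_zsmul_cancel (2 * m + 2 * n) hc1 _
    (by linear_combination (norm := module) -E0' + (4 * m) • hx + (4 * n) • hy)

/-- Linear algebra behind the corner-annihilation step. -/
lemma aux_corner {M : Type*} [AddCommGroup M] [Module ℂ M] {m n : ℤ}
    (hc1 : 2 * m + 2 * n ≠ 0) (hc4 : 2 * m ≠ 0) (hc5 : 2 * n ≠ 0)
    (v : M) (φ ψ : M →+ M)
    (hφφ : ∀ z, φ (φ z) = φ z) (hψψ : ∀ z, ψ (ψ z) = ψ z)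
    (hcomm : ∀ z, φ (ψ z) = ψ (φ z))
    (hφk : ∀ (k : ℤ) (z : M), φ (k • z) = k • φ z)
    (hψk : ∀ (k : ℤ) (z : M), ψ (k • z) = k • ψ z)
    (E0 : (0 : M) = (2 * m) • (φ v) + (2 * n) • (ψ v)) :
    φ v = 0 ∧ ψ v = 0 := by
  have e1 := congrArg (⇑φ) E0
  simp only [map_zero, map_add, hφk, hφφ, hcomm] at e1
  have e2 := congrArg (⇑ψ) e1
  simp only [map_zero, map_add, hψk, hψψ, hcomm] at e2
  have e3 := congrArg (⇑ψ) E0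
  simp only [map_zero, map_add, hψk, hψψ, hcomm] at e3
  have hw : ψ (φ v) = 0 := aux_zsmul_cancel (2 * m + 2 * n) hc1 _
    (by linear_combination (norm := module) -e2)
  constructor
  · exact aux_zsmul_cancel (2 * m) hc4 _
      (by linear_combination (norm := module) -e1 - (2 * n) • hw)
  · exact aux_zsmul_cancel (2 * n) hc5 _
      (by linear_combination (norm := module) -e3 - (2 * m) • hw)

/-- If a two-sided ideal `J` contained in the subring generated by
idempotents is a left separating set of `M`, then every `(m,n)`-Jordan derivable
mapping at zero with `δ 1 = 0` vanishes. -/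
theorem mn_jordan_derivable_at_zero_eq_zero_of_left_separating
    {A M : Type*} [Ring A] [Algebra ℂ A]
    [AddCommGroup M] [Module ℂ M] [Module A M] [Module Aᵐᵒᵖ M]
    [SMulCommClass A Aᵐᵒᵖ M]
    (m n : ℕ) (hm : 0 < m) (hn : 0 < n) (hmn : m ≠ n)
    (δ : A → M) (hadd : ∀ a b : A, δ (a + b) = δ a + δ b)
    (hδ1 : δ 1 = 0)
    (hzero : ∀ X Y : A, X * Y = 0 → Y * X = 0 →
      (m + n) • δ (X * Y + Y * X) =
        (2 * m) • (op Y • δ X) + (2 * m) • (op X • δ Y)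
          + (2 * n) • (X • δ Y) + (2 * n) • (Y • δ X))
    (J : TwoSidedIdeal A)
    (hJsub : (J : Set A) ⊆ (Subring.closure {P : A | P * P = P} : Set A))
    (hsep : ∀ x : M, (∀ S ∈ J, op S • x = 0) → x = 0) :
    ∀ a : A, δ a = 0 := by
  -- basic additivity facts
  have h0 : δ 0 = 0 := by
    have h := hadd 0 0
    rw [zero_add] at h
    exact left_eq_add.mp h
  have hneg : ∀ a : A, δ (-a) = - δ a := by
    intro a
    have h := hadd a (-a)
    rw [add_neg_cancel, h0] at h
    exact (neg_eq_of_add_eq_zero_right h.symm).symm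
  -- nonzero integer constants
  have hc1 : (2 * (m : ℤ) + 2 * n) ≠ 0 := by omega
  have hc2 : (2 * (n : ℤ) - 2 * m) ≠ 0 := by omega
  have hc3 : (2 * (m : ℤ) - 2 * n) ≠ 0 := by omega
  have hc4 : (2 * (m : ℤ)) ≠ 0 := by omega
  have hc5 : (2 * (n : ℤ)) ≠ 0 := by omega
  -- the basic relation, in ℤ-scalar form
  have hz : ∀ X Y : A, X * Y = 0 → Y * X = 0 →
      (0 : M) = (2 * (m : ℤ)) • (op Y • δ X) + (2 * (m : ℤ)) • (op X • δ Y)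
        + (2 * (n : ℤ)) • (X • δ Y) + (2 * (n : ℤ)) • (Y • δ X) := by
    intro X Y h1 h2
    have h := hzero X Y h1 h2
    rw [h1, h2, add_zero, h0, smul_zero] at h
    exact_mod_cast h
  -- Step 1 : δ vanishes on idempotents
  have L1 : ∀ P : A, P * P = P → δ P = 0 := by
    intro P hP
    have hPQ : P * (1 - P) = 0 := by rw [mul_sub, mul_one, hP, sub_self]
    have hQP : (1 - P) * P = 0 := by rw [sub_mul, one_mul, hP, sub_self]
    have hdQ : δ (1 - P) = - δ P := by
      have h2 := hadd P (1 - P)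
      rw [add_sub_cancel, hδ1] at h2
      exact (neg_eq_of_add_eq_zero_right h2.symm).symm
    have E0 := hz P (1 - P) hPQ hQP
    rw [hdQ, op_sub, op_one, sub_smul, one_smul, sub_smul, one_smul] at E0
    -- E0 : 0 = 2m•(δP - opP•δP) + 2m•(opP•(-δP)) + 2n•(P•(-δP)) + 2n•(δP - P•δP)
    exact aux_idem hc1 hc2 hc3 (δ P)
      (AddMonoidHom.mk' (fun z : M => op P • z) (fun a b => smul_add (op P) a b))
      (AddMonoidHom.mk' (fun z : M => P • z) (fun a b => smul_add P a b))
      (fun z => by show op P • (op P • z) = op P • z; rw [smul_smul, ← op_mul, hP])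
      (fun z => by show P • (P • z) = P • z; rw [smul_smul, hP])
      (fun z => by show op P • (P • z) = P • (op P • z); exact (smul_comm P (op P) z).symm)
      (fun k z => by show op P • (k • z) = k • (op P • z); exact smul_comm (op P) k z)
      (fun k z => by show P • (k • z) = k • (P • z); exact smul_comm P k z)
      E0
  -- Step 2 : corner annihilation
  have L3 : ∀ P : A, P * P = P → ∀ b : A,
      op P • δ ((1 - P) * b * (1 - P)) = 0 ∧ P • δ ((1 - P) * b * (1 - P)) = 0 := by
    intro P hP b
    have hXY : P * ((1 - P) * b * (1 - P)) = 0 := by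
      have h : P * ((1 - P) * b * (1 - P)) = (P - P * P) * (b * (1 - P)) := by noncomm_ring
      rw [h, hP, sub_self, zero_mul]
    have hYX : ((1 - P) * b * (1 - P)) * P = 0 := by
      have h : ((1 - P) * b * (1 - P)) * P = ((1 - P) * b) * (P - P * P) := by noncomm_ring
      rw [h, hP, sub_self, mul_zero]
    have E0 := hz P ((1 - P) * b * (1 - P)) hXY hYX
    rw [L1 P hP] at E0
    simp only [smul_zero, add_zero, zero_add] at E0
    -- E0 : 0 = 2m•(opP•v) + 2n•(P•v)  with v = δ ((1-P)*b*(1-P))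
    exact aux_corner hc1 hc4 hc5 (δ ((1 - P) * b * (1 - P)))
      (AddMonoidHom.mk' (fun z : M => op P • z) (fun a b => smul_add (op P) a b))
      (AddMonoidHom.mk' (fun z : M => P • z) (fun a b => smul_add P a b))
      (fun z => by show op P • (op P • z) = op P • z; rw [smul_smul, ← op_mul, hP])
      (fun z => by show P • (P • z) = P • z; rw [smul_smul, hP])
      (fun z => by show op P • (P • z) = P • (op P • z); exact (smul_comm P (op P) z).symm)
      (fun k z => by show op P • (k • z) = k • (op P • z); exact smul_comm (op P) k z)
      (fun k z => by show P • (k • z) = k • (P • z); exact smul_comm P k z)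
      E0
  -- Step 3 : δ vanishes on off-diagonal corners
  have L2 : ∀ P : A, P * P = P → ∀ b : A,
      δ (P * b * (1 - P)) = 0 ∧ δ ((1 - P) * b * P) = 0 := by
    intro P hP b
    have hQQ : (1 - P) * (1 - P) = 1 - P := by
      have h : (1 - P) * (1 - P) = 1 - P - P + P * P := by noncomm_ring
      rw [h, hP]; abel
    constructor
    · have hE : (P + P * b * (1 - P)) * (P + P * b * (1 - P)) = P + P * b * (1 - P) := by
        have h : (P + P * b * (1 - P)) * (P + P * b * (1 - P))
            = P * P + (P * P) * b * (1 - P) + P * b * ((1 - P) * P)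
              + P * b * ((1 - P) * P) * b * (1 - P) := by noncomm_ring
        rw [h, hP, show (1 - P) * P = 0 by rw [sub_mul, one_mul, hP, sub_self]]
        noncomm_ring
      have h1 := hadd P (P * b * (1 - P))
      rw [L1 _ hE, L1 P hP, zero_add] at h1
      exact h1.symm
    · have hF : ((1 - P) + (1 - P) * b * P) * ((1 - P) + (1 - P) * b * P)
          = (1 - P) + (1 - P) * b * P := by
        have h : ((1 - P) + (1 - P) * b * P) * ((1 - P) + (1 - P) * b * P)
            = (1 - P) * (1 - P) + ((1 - P) * (1 - P)) * b * P + (1 - P) * b * (P * (1 - P))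
              + (1 - P) * b * (P * (1 - P)) * b * P := by noncomm_ring
        rw [h, hQQ, show P * (1 - P) = 0 by rw [mul_sub, mul_one, hP, sub_self]]
        noncomm_ring
      have h1 := hadd (1 - P) ((1 - P) * b * P)
      rw [L1 _ hF, L1 _ hQQ, zero_add] at h1
      exact h1.symm
  -- Step 4 : the key corner identity
  have L4 : ∀ P : A, P * P = P → ∀ a : A,
      op P • δ a = δ (P * a * P) ∧ P • δ a = δ (P * a * P) := by
    intro P hP a
    have hQQ : (1 - P) * (1 - P) = 1 - P := by
      have h : (1 - P) * (1 - P) = 1 - P - P + P * P := by noncomm_ring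
      rw [h, hP]; abel
    have hsplit : δ a = δ (P * a * P) + δ ((1 - P) * a * (1 - P)) := by
      have h1 : a = P * a * P + (P * a * (1 - P) + ((1 - P) * a * P + (1 - P) * a * (1 - P))) := by
        noncomm_ring
      calc δ a = δ (P * a * P + (P * a * (1 - P) + ((1 - P) * a * P + (1 - P) * a * (1 - P)))) := by
            rw [← h1]
        _ = δ (P * a * P) + (δ (P * a * (1 - P))
              + (δ ((1 - P) * a * P) + δ ((1 - P) * a * (1 - P)))) := by
            rw [hadd, hadd, hadd]
        _ = δ (P * a * P) + δ ((1 - P) * a * (1 - P)) := by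
            rw [(L2 P hP a).1, (L2 P hP a).2]; abel
    have hPfix : op P • δ (P * a * P) = δ (P * a * P) := by
      have h2 := (L3 (1 - P) hQQ a).1
      rw [sub_sub_cancel] at h2
      rw [op_sub, op_one, sub_smul, one_smul, sub_eq_zero] at h2
      exact h2.symm
    have hPfixL : P • δ (P * a * P) = δ (P * a * P) := by
      have h2 := (L3 (1 - P) hQQ a).2
      rw [sub_sub_cancel] at h2
      rw [sub_smul, one_smul, sub_eq_zero] at h2
      exact h2.symm
    constructor
    · rw [hsplit, smul_add, (L3 P hP a).1, add_zero, hPfix]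
    · rw [hsplit, smul_add, (L3 P hP a).2, add_zero, hPfixL]
  -- Step 5 : mixed corner results
  have L5 : ∀ P : A, P * P = P → ∀ b c : A,
      δ (P * c * (1 - P) * b * P) = 0 ∧ op (P * c * (1 - P)) • δ b = 0 := by
    intro P hP b c
    have hQP : (1 - P) * P = 0 := by rw [sub_mul, one_mul, hP, sub_self]
    have hPQ : P * (1 - P) = 0 := by rw [mul_sub, mul_one, hP, sub_self]
    have hQQ : (1 - P) * (1 - P) = 1 - P := by
      have h : (1 - P) * (1 - P) = 1 - P - P + P * P := by noncomm_ring
      rw [h, hP]; abel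
    have hE : (P + P * c * (1 - P)) * (P + P * c * (1 - P)) = P + P * c * (1 - P) := by
      have h : (P + P * c * (1 - P)) * (P + P * c * (1 - P))
          = P * P + (P * P) * c * (1 - P) + P * c * ((1 - P) * P)
            + P * c * ((1 - P) * P) * c * (1 - P) := by noncomm_ring
      rw [h, hP, hQP]; noncomm_ring
    have hF : ((1 - P) + P * c * (1 - P)) * ((1 - P) + P * c * (1 - P))
        = (1 - P) + P * c * (1 - P) := by
      have h : ((1 - P) + P * c * (1 - P)) * ((1 - P) + P * c * (1 - P))
          = (1 - P) * (1 - P) + ((1 - P) * P) * c * (1 - P) + P * c * ((1 - P) * (1 - P))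
            + P * c * ((1 - P) * P) * c * (1 - P) := by noncomm_ring
      rw [h, hQP, hQQ]; noncomm_ring
    have hα := (L4 _ hE b).1
    have hexpE : (P + P * c * (1 - P)) * b * (P + P * c * (1 - P))
        = P * b * P + (P * (b * P * c) * (1 - P)
          + (P * c * (1 - P) * b * P + P * (c * (1 - P) * b * P * c) * (1 - P))) := by
      noncomm_ring
    rw [hexpE, hadd, hadd, hadd, (L2 P hP (b * P * c)).1,
      (L2 P hP (c * (1 - P) * b * P * c)).1, op_add, add_smul, (L4 P hP b).1] at hα
    rw [zero_add, add_zero] at hα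
    have hα' : op (P * c * (1 - P)) • δ b = δ (P * c * (1 - P) * b * P) :=
      add_left_cancel hα
    have hβ := (L4 _ hF b).1
    have hexpF : ((1 - P) + P * c * (1 - P)) * b * ((1 - P) + P * c * (1 - P))
        = (1 - P) * b * (1 - P) + ((1 - P) * (b * P * c) * (1 - P)
          + (P * (c * (1 - P) * b) * (1 - P) + P * (c * (1 - P) * b * P * c) * (1 - P))) := by
      noncomm_ring
    rw [hexpF, hadd, hadd, hadd, (L2 P hP (c * (1 - P) * b)).1,
      (L2 P hP (c * (1 - P) * b * P * c)).1, op_add, add_smul,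
      (L4 (1 - P) hQQ b).1] at hβ
    rw [add_zero, add_zero] at hβ
    have hβ' : op (P * c * (1 - P)) • δ b = δ ((1 - P) * (b * P * c) * (1 - P)) :=
      add_left_cancel hβ
    have hPfixL : P • δ (P * (c * (1 - P) * b) * P) = δ (P * (c * (1 - P) * b) * P) := by
      have h2 := (L3 (1 - P) hQQ (c * (1 - P) * b)).2
      rw [sub_sub_cancel] at h2
      rw [sub_smul, one_smul, sub_eq_zero] at h2
      exact h2.symm
    have hform : P * c * (1 - P) * b * P = P * (c * (1 - P) * b) * P := by noncomm_ring
    have hvanish : δ (P * c * (1 - P) * b * P) = 0 := by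
      have hkill : P • δ ((1 - P) * (b * P * c) * (1 - P)) = 0 := (L3 P hP (b * P * c)).2
      calc δ (P * c * (1 - P) * b * P) = P • δ (P * c * (1 - P) * b * P) := by
            rw [hform]; exact hPfixL.symm
        _ = P • δ ((1 - P) * (b * P * c) * (1 - P)) := by rw [hα'.symm.trans hβ']
        _ = 0 := hkill
    exact ⟨hvanish, by rw [hα', hvanish]⟩
  -- The main inductive predicate over the subring generated by idempotents
  have hPhiMon : ∀ s ∈ Submonoid.closure {P : A | P * P = P},
      (∀ a : A, op s • δ a = s • δ a) ∧
      (∀ a : A, δ (a * s + s * a) = op s • δ a + op s • δ a) := by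
    intro s hs
    induction hs using Submonoid.closure_induction_left with
    | one =>
      constructor
      · intro a; rw [op_one, one_smul, one_smul]
      · intro a
        rw [mul_one, one_mul, hadd, op_one, one_smul]
    | mul_left P hPg w hw ih =>
      have hP : P * P = P := hPg
      have hQQ : (1 - P) * (1 - P) = 1 - P := by
        have h : (1 - P) * (1 - P) = 1 - P - P + P * P := by noncomm_ring
        rw [h, hP]; abel
      constructor
      · intro a
        calc op (P * w) • δ a = op w • (op P • δ a) := by rw [op_mul, mul_smul]
          _ = op w • (P • δ a) := by rw [(L4 P hP a).1, ← (L4 P hP a).2]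
          _ = P • (op w • δ a) := (smul_comm P (op w) (δ a)).symm
          _ = P • (w • δ a) := by rw [(ih.1 a)]
          _ = (P * w) • δ a := (mul_smul P w (δ a)).symm
      · intro a
        have hr : a * (P * w) + (P * w) * a
            = ((P * a * P) * w + w * (P * a * P))
              + ((1 - P) * (a * P * w) * P
                + ((1 - P) * a * P * w * (1 - P)
                  + (P * w * (1 - P) * a * P
                    + (P * (w * a) * (1 - P) + (-((1 - P) * (w * P * a) * P)))))) := by
          noncomm_ring
        have z1 : δ ((1 - P) * (a * P * w) * P) = 0 := (L2 P hP (a * P * w)).2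
        have z2 : δ ((1 - P) * a * P * w * (1 - P)) = 0 := by
          have h := (L5 (1 - P) hQQ w a).1
          rw [sub_sub_cancel] at h
          exact h
        have z3 : δ (P * w * (1 - P) * a * P) = 0 := (L5 P hP a w).1
        have z4 : δ (P * (w * a) * (1 - P)) = 0 := (L2 P hP (w * a)).1
        have z5 : δ (-((1 - P) * (w * P * a) * P)) = 0 := by
          rw [hneg, (L2 P hP (w * P * a)).2, neg_zero]
        have hkey : δ (a * (P * w) + (P * w) * a) = δ ((P * a * P) * w + w * (P * a * P)) := by
          rw [hr]
          simp only [hadd]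
          rw [z1, z2, z3, z4, z5]
          abel
        have hstep : op w • δ (P * a * P) = op (P * w) • δ a := by
          rw [← (L4 P hP a).1, ← mul_smul, ← op_mul]
        rw [hkey, ih.2 (P * a * P), hstep]
  have hPhi : ∀ s ∈ Subring.closure {P : A | P * P = P},
      (∀ a : A, op s • δ a = s • δ a) ∧
      (∀ a : A, δ (a * s + s * a) = op s • δ a + op s • δ a) := by
    intro s hs
    have hs' : s ∈ AddSubgroup.closure (Submonoid.closure {P : A | P * P = P} : Set A) :=
      Subring.mem_closure_iff.mp hs
    clear hs
    induction hs' using AddSubgroup.closure_induction with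
    | mem x hx => exact hPhiMon x hx
    | zero =>
      constructor
      · intro a; rw [op_zero, zero_smul, zero_smul]
      · intro a
        rw [mul_zero, zero_mul, add_zero, h0, op_zero, zero_smul, add_zero]
    | add x y hx hy ihx ihy =>
      constructor
      · intro a
        rw [op_add, add_smul, add_smul, ihx.1 a, ihy.1 a]
      · intro a
        have hr : a * (x + y) + (x + y) * a = (a * x + x * a) + (a * y + y * a) := by
          noncomm_ring
        rw [hr, hadd, ihx.2 a, ihy.2 a, op_add, add_smul]
        abel
    | neg x hx ihx =>
      constructor
      · intro a
        rw [op_neg, neg_smul, neg_smul, ihx.1 a]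
      · intro a
        have hr : a * (-x) + (-x) * a = -(a * x + x * a) := by noncomm_ring
        rw [hr, hneg, ihx.2 a, op_neg, neg_smul]
        abel
  -- δ vanishes on the subring generated by idempotents
  have hδcl : ∀ s ∈ Subring.closure {P : A | P * P = P}, δ s = 0 := by
    intro s hs
    have h := (hPhi s hs).2 1
    rw [one_mul, mul_one, hδ1, smul_zero, add_zero, hadd] at h
    refine aux_zsmul_cancel 2 (by norm_num) _ ?_
    rw [two_smul]; exact h
  -- conclusion
  intro a
  refine hsep (δ a) ?_
  intro S hS
  have hSc : S ∈ Subring.closure {P : A | P * P = P} := hJsub hS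
  have h1 := (hPhi S hSc).2 a
  have haS : δ (a * S) = 0 := hδcl _ (hJsub (J.mul_mem_left a S hS))
  have hSa : δ (S * a) = 0 := hδcl _ (hJsub (J.mul_mem_right S a hS))
  rw [hadd, haS, hSa, add_zero] at h1
  refine aux_zsmul_cancel 2 (by norm_num) _ ?_
  rw [two_smul]; exact h1.symm
end

section
/- Let A be a unital algebra over ℂ and X a complex vector space. If φ : A × A → X is a bilinear map such that φ(A, B) = 0 whenever AB = BA = 0, then for every A ∈ A and every idempotent P in A, φ(A, P) + φ(P, A) = φ(AP, 1) + φ(1, PA). -/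
/-!
Split `a` into its Peirce components with respect to `P` and `Q = 1 - P`. The diagonal
components `PaP` and `QaQ` have zero products with `Q` and `P` respectively, so `φ` kills those
pairs. For an off-diagonal component `u = PaQ` one has `(Q + u)(P - u) = (P - u)(Q + u) = 0`, and
expanding `φ (Q + u) (P - u) = 0` gives `φ u P = φ Q u`; symmetrically `φ P (QaP) = φ (QaP) Q`.
These are exactly the terms by which the two sides of the identity differ.
-/

section Peirce

variable {A : Type*} [Ring A]

theorem mul_left_eq_peirce {e f : A} (hef : e + f = 1) (x : A) :
    e * x = e * x * e + e * x * f := by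
  rw [← mul_add, hef, mul_one]

theorem mul_right_eq_peirce {e f : A} (hef : e + f = 1) (x : A) :
    x * e = e * x * e + f * x * e := by
  rw [← add_mul, ← add_mul, hef, one_mul]

theorem eq_peirce {e f : A} (hef : e + f = 1) (x : A) :
    x = e * x * e + e * x * f + (f * x * e + f * x * f) := by
  calc x = (e + f) * x * (e + f) := by rw [hef, one_mul, mul_one]
    _ = _ := by noncomm_ring

end Peirce

section ZeroProducts

variable {R A X : Type*} [CommSemiring R] [Ring A] [Module R A] [AddCommGroup X] [Module R X]
variable (φ : A →ₗ[R] A →ₗ[R] X)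

theorem apply_corner_orthogonal_eq_zero (h : ∀ a b : A, a * b = 0 → b * a = 0 → φ a b = 0)
    {e f : A} (hef : e * f = 0) (hfe : f * e = 0) (x : A) : φ (e * x * e) f = 0 :=
  h _ _ (by rw [mul_assoc, hef, mul_zero])
    (by rw [← mul_assoc, ← mul_assoc, hfe, zero_mul, zero_mul])

theorem apply_orthogonal_corner_eq_zero (h : ∀ a b : A, a * b = 0 → b * a = 0 → φ a b = 0)
    {e f : A} (hef : e * f = 0) (hfe : f * e = 0) (x : A) : φ f (e * x * e) = 0 :=
  h _ _ (by rw [← mul_assoc, ← mul_assoc, hfe, zero_mul, zero_mul])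
    (by rw [mul_assoc, hef, mul_zero])

theorem apply_offDiag_left_eq_apply_right (h : ∀ a b : A, a * b = 0 → b * a = 0 → φ a b = 0)
    {e f : A} (he : IsIdempotentElem e) (hf : IsIdempotentElem f) (hef : e * f = 0)
    (hfe : f * e = 0) (x : A) : φ (e * x * f) e = φ f (e * x * f) := by
  set u := e * x * f
  have heu : e * u = u := by rw [← mul_assoc, ← mul_assoc, he.eq]
  have huf : u * f = u := by rw [mul_assoc, hf.eq]
  have hfu : f * u = 0 := by rw [← mul_assoc, ← mul_assoc, hfe, zero_mul, zero_mul]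
  have hue : u * e = 0 := by rw [mul_assoc, hfe, mul_zero]
  have huu : u * u = 0 := calc
    u * u = u * f * u := by rw [huf]
    _ = 0 := by rw [mul_assoc, hfu, mul_zero]
  have hvanish : φ (f + u) (e - u) = 0 := h _ _
    (by rw [add_mul, mul_sub, mul_sub, hfe, hfu, hue, huu]; abel)
    (by rw [sub_mul, mul_add, mul_add, hef, heu, huf, huu]; abel)
  rw [map_add, LinearMap.add_apply, map_sub, map_sub, h f e hfe hef, h u u huu huu] at hvanish
  rw [← sub_eq_zero, ← hvanish]
  abel

end ZeroProducts

/-- A bilinear map vanishing on pairs with zero products satisfies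
`φ(A,P) + φ(P,A) = φ(AP,1) + φ(1,PA)` for every idempotent `P`. -/
theorem bilinear_zero_product_identity_idempotent
    {A X : Type*} [Ring A] [Algebra ℂ A] [AddCommGroup X] [Module ℂ X]
    (φ : A →ₗ[ℂ] A →ₗ[ℂ] X)
    (h : ∀ a b : A, a * b = 0 → b * a = 0 → φ a b = 0)
    (a : A) (P : A) (hP : P * P = P) :
    φ a P + φ P a = φ (a * P) 1 + φ 1 (P * a) := by
  have hP' : IsIdempotentElem P := hP
  have hPQ := hP'.mul_one_sub_self
  have hQP := hP'.one_sub_mul_self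
  have hQ := hP'.one_sub
  set Q := 1 - P
  have hsum : P + Q = 1 := add_sub_cancel P 1
  rw [mul_left_eq_peirce hsum a, mul_right_eq_peirce hsum a, ← hsum]
  conv_lhs => rw [eq_peirce hsum a]
  simp only [map_add, LinearMap.add_apply,
    apply_corner_orthogonal_eq_zero φ h hPQ hQP, apply_orthogonal_corner_eq_zero φ h hPQ hQP,
    apply_corner_orthogonal_eq_zero φ h hQP hPQ, apply_orthogonal_corner_eq_zero φ h hQP hPQ,
    apply_offDiag_left_eq_apply_right φ h hP' hQ hPQ hQP,
    ← apply_offDiag_left_eq_apply_right φ h hQ hP' hQP hPQ]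
  abel
end

section
/- Let A and B be unital algebras over ℂ, M a unital (A,B)-bimodule that is faithful as a left A-module and faithful as a right B-module, and let U be the triangular algebra of matrices [[a, x],[0, b]] with a ∈ A, x ∈ M, b ∈ B. Let m, n be positive integers with m ≠ n. If δ : U → U is an additive map with δ(1) = 0 satisfying (m+n)·δ(XY+YX) = 2m·δ(X)·Y + 2m·δ(Y)·X + 2n·X·δ(Y) + 2n·Y·δ(X) whenever XY = YX = 0, then δ = 0. -/
set_option linter.unusedSectionVars false

open MulOpposite

/-- The triangular algebra `[[A, M],[0, B]]`, realized on the underlying set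
`A × M × B` with the usual matrix operations. -/
abbrev Tri (A M B : Type*) := A × M × B

section Tri

variable {A M B : Type*} [Ring A] [Ring B] [AddCommGroup M]
  [Module A M] [Module Bᵐᵒᵖ M] [SMulCommClass A Bᵐᵒᵖ M]

instance : Mul (Tri A M B) :=
  ⟨fun p q => (p.1 * q.1, p.1 • q.2.1 + op q.2.2 • p.2.1, p.2.2 * q.2.2)⟩

instance : One (Tri A M B) := ⟨(1, 0, 1)⟩

@[simp] lemma Tri.mul_def (p q : Tri A M B) :
    p * q = (p.1 * q.1, p.1 • q.2.1 + op q.2.2 • p.2.1, p.2.2 * q.2.2) := rfl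

@[simp] lemma Tri.one_def : (1 : Tri A M B) = ((1 : A), (0 : M), (1 : B)) := rfl

instance : Ring (Tri A M B) :=
  { (inferInstance : AddCommGroup (Tri A M B)) with
    left_distrib := by
      rintro ⟨a₁, x₁, b₁⟩ ⟨a₂, x₂, b₂⟩ ⟨a₃, x₃, b₃⟩
      simp [Prod.ext_iff, mul_add, smul_add, add_smul, Prod.add_def]
      abel
    right_distrib := by
      rintro ⟨a₁, x₁, b₁⟩ ⟨a₂, x₂, b₂⟩ ⟨a₃, x₃, b₃⟩
      simp [Prod.ext_iff, add_mul, smul_add, add_smul, Prod.add_def]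
      abel
    zero_mul := by
      rintro ⟨a, x, b⟩
      simp [Prod.ext_iff]
    mul_zero := by
      rintro ⟨a, x, b⟩
      simp [Prod.ext_iff]
    mul_assoc := by
      rintro ⟨a₁, x₁, b₁⟩ ⟨a₂, x₂, b₂⟩ ⟨a₃, x₃, b₃⟩
      simp [Prod.ext_iff, mul_assoc, mul_smul, smul_add, add_smul]
      rw [smul_comm a₁ (op b₃) x₂]
      abel
    one_mul := by
      rintro ⟨a, x, b⟩
      simp [Prod.ext_iff]
    mul_one := by
      rintro ⟨a, x, b⟩
      simp [Prod.ext_iff] }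

end Tri


section Aux
variable {V : Type*} [AddCommGroup V] [Module ℂ V]

lemma aux_nsmul_cancel {k : ℕ} (hk : k ≠ 0) {v : V} (h : k • v = 0) : v = 0 := by
  have h' : ((k : ℂ)) • v = 0 := by rw [Nat.cast_smul_eq_nsmul]; exact h
  rcases smul_eq_zero.mp h' with h'' | h''
  · exact absurd (Nat.cast_injective (h''.trans (Nat.cast_zero (R := ℂ)).symm)) hk
  · exact h''

lemma aux_nsmul_sub_cancel {j k : ℕ} (hjk : j ≠ k) {v : V}
    (h : j • v = k • v) : v = 0 := by
  have h' : ((j : ℂ) - k) • v = 0 := by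
    rw [sub_smul, Nat.cast_smul_eq_nsmul, Nat.cast_smul_eq_nsmul, h, sub_self]
  rcases smul_eq_zero.mp h' with h'' | h''
  · exact absurd (Nat.cast_injective (R := ℂ) (sub_eq_zero.mp h'')) hjk
  · exact h''

end Aux

section Aux2
variable {R : Type*} [Ring R] [Algebra ℂ R]

lemma aux_ring_cancel₂ {j k : ℕ} (hjk : j + k ≠ 0) {v : R}
    (h : (j : R) * v + (k : R) * v = 0) : v = 0 := by
  have h' : ((j + k : ℕ)) • v = 0 := by
    rw [nsmul_eq_mul]; push_cast; rw [add_mul]; exact h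
  exact aux_nsmul_cancel hjk h'

lemma aux_ring_cancel₂' {j k : ℕ} (hjk : j + k ≠ 0) {v : R}
    (h : -((j : R) * v) + -((k : R) * v) = 0) : v = 0 := by
  rw [← neg_add, neg_eq_zero] at h
  exact aux_ring_cancel₂ hjk h

end Aux2

/-- Let `M` be a faithful unital `(A,B)`-bimodule and `U` the
triangular algebra `[[A, M],[0, B]]`.  Every `(m,n)`-Jordan derivable mapping at
zero (`0 < m`, `0 < n`, `m ≠ n`) from `U` into itself with `δ 1 = 0` is zero. -/
theorem mn_jordan_derivable_at_zero_triangular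
    {A B M : Type*} [Ring A] [Algebra ℂ A] [Ring B] [Algebra ℂ B]
    [AddCommGroup M] [Module ℂ M] [Module A M] [Module Bᵐᵒᵖ M]
    [SMulCommClass A Bᵐᵒᵖ M]
    (hfaithL : ∀ a : A, (∀ x : M, a • x = 0) → a = 0)
    (hfaithR : ∀ b : B, (∀ x : M, op b • x = 0) → b = 0)
    (m n : ℕ) (hm : 0 < m) (hn : 0 < n) (hmn : m ≠ n)
    (δ : Tri A M B → Tri A M B)
    (hadd : ∀ p q : Tri A M B, δ (p + q) = δ p + δ q)
    (hδ1 : δ 1 = 0)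
    (hzero : ∀ X Y : Tri A M B, X * Y = 0 → Y * X = 0 →
      (m + n) • δ (X * Y + Y * X) =
        (2 * m) • (δ X * Y) + (2 * m) • (δ Y * X)
          + (2 * n) • (X * δ Y) + (2 * n) • (Y * δ X)) :
    ∀ p : Tri A M B, δ p = 0 := by
  classical
  have δ0 : δ 0 = 0 := by
    have h := hadd 0 0
    rw [add_zero] at h
    nth_rewrite 1 [← add_zero (δ 0)] at h
    exact (add_left_cancel h).symm
  have δneg : ∀ p : Tri A M B, δ (-p) = - δ p := by
    intro p
    have h := hadd p (-p)
    rw [add_neg_cancel, δ0] at h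
    exact eq_neg_of_add_eq_zero_right h.symm
  -- simplified form of the hypothesis
  have key : ∀ X Y : Tri A M B, X * Y = 0 → Y * X = 0 →
      (2 * m) • (δ X * Y) + (2 * m) • (δ Y * X)
        + (2 * n) • (X * δ Y) + (2 * n) • (Y * δ X) = 0 := by
    intro X Y h1 h2
    have h := hzero X Y h1 h2
    rw [h1, h2, add_zero, δ0, smul_zero] at h
    exact h.symm
  have hmn2 : 2 * m ≠ 2 * n := by omega
  have hmn0 : 2 * m + 2 * n ≠ 0 := by omega
  have hm0 : 2 * m ≠ 0 := by omega
  have hn0 : 2 * n ≠ 0 := by omega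
  set P : Tri A M B := ((1 : A), (0 : M), (0 : B)) with hPdef
  set Q : Tri A M B := ((0 : A), (0 : M), (1 : B)) with hQdef
  have hPQ : P + Q = 1 := by simp [hPdef, hQdef, Prod.ext_iff, Prod.add_def]
  have δQ' : δ Q = - δ P := by
    have h := hadd P Q
    rw [hPQ, hδ1] at h
    exact eq_neg_of_add_eq_zero_right h.symm
  -- Step 1 : δ P = 0, δ Q = 0
  have hδP : δ P = 0 := by
    have h := key P Q (by simp [hPdef, hQdef, Prod.ext_iff]) (by simp [hPdef, hQdef, Prod.ext_iff])
    rw [δQ'] at h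
    simp [hPdef, hQdef, Prod.ext_iff, Prod.add_def, Prod.smul_def] at h
    obtain ⟨h1, h2, h3⟩ := h
    have ha : (δ P).1 = 0 := by
      apply aux_ring_cancel₂' hmn0
      push_cast
      exact h1
    have hx : (δ P).2.1 = 0 := by
      apply aux_nsmul_sub_cancel hmn2
      exact add_neg_eq_zero.mp h2
    have hb : (δ P).2.2 = 0 := by
      apply aux_ring_cancel₂ hmn0
      push_cast
      exact h3
    exact Prod.ext ha (Prod.ext hx hb)
  have hδQ : δ Q = 0 := by rw [δQ', hδP, neg_zero]
  -- Step 2 : δ vanishes on M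
  have δM : ∀ x : M, δ ((0 : A), x, (0 : B)) = 0 := by
    intro x
    have hX : δ (((1 : A), x, (0 : B)) : Tri A M B) = δ ((0 : A), x, (0 : B)) := by
      have h := hadd P ((0 : A), x, (0 : B))
      have e : P + (((0 : A), x, (0 : B)) : Tri A M B) = ((1 : A), x, (0 : B)) := by
        simp [hPdef, Prod.ext_iff, Prod.add_def]
      rw [e, hδP, zero_add] at h
      exact h
    have hY : δ (((0 : A), -x, (1 : B)) : Tri A M B) = - δ ((0 : A), x, (0 : B)) := by
      have h := hadd Q ((0 : A), -x, (0 : B))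
      have e : Q + (((0 : A), -x, (0 : B)) : Tri A M B) = ((0 : A), -x, (1 : B)) := by
        simp [hQdef, Prod.ext_iff, Prod.add_def]
      have e2 : (((0 : A), -x, (0 : B)) : Tri A M B) = -(((0 : A), x, (0 : B)) : Tri A M B) := by
        simp [Prod.ext_iff]
      rw [e, hδQ, zero_add, e2, δneg] at h
      exact h
    have h := key ((1 : A), x, (0 : B)) ((0 : A), -x, (1 : B))
      (by simp [Prod.ext_iff]) (by simp [Prod.ext_iff])
    rw [hX, hY] at h
    simp [Prod.ext_iff, Prod.add_def, Prod.smul_def] at h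
    obtain ⟨h1, h2, h3⟩ := h
    have ha : (δ ((0 : A), x, (0 : B)) : Tri A M B).1 = 0 := by
      apply aux_ring_cancel₂' hmn0
      push_cast
      exact h1
    have hb : (δ ((0 : A), x, (0 : B)) : Tri A M B).2.2 = 0 := by
      apply aux_ring_cancel₂ hmn0
      push_cast
      exact h3
    have hx : (δ ((0 : A), x, (0 : B)) : Tri A M B).2.1 = 0 := by
      simp [ha, hb] at h2
      apply aux_nsmul_sub_cancel hmn2
      exact add_neg_eq_zero.mp h2
    exact Prod.ext ha (Prod.ext hx hb)
  -- Step 3 : δ (a,0,0) has zero M and B components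
  have δA0 : ∀ a : A, (δ ((a, 0, 0) : Tri A M B)).2.1 = 0 ∧ (δ ((a, 0, 0) : Tri A M B)).2.2 = 0 := by
    intro a
    have h := key ((a, 0, 0) : Tri A M B) Q
      (by simp [hQdef, Prod.ext_iff]) (by simp [hQdef, Prod.ext_iff])
    rw [hδQ] at h
    simp [hQdef, Prod.ext_iff, Prod.add_def, Prod.smul_def] at h
    obtain ⟨h2, h3⟩ := h
    constructor
    · exact aux_nsmul_cancel hm0 h2
    · apply aux_ring_cancel₂ hmn0
      push_cast
      exact h3
  -- Step 4 : δ (a,0,0) = 0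
  have δA : ∀ a : A, δ ((a, 0, 0) : Tri A M B) = 0 := by
    intro a
    have ha : (δ ((a, 0, 0) : Tri A M B)).1 = 0 := by
      apply hfaithL
      intro y
      have e : δ ((a, -(a • y), (0 : B)) : Tri A M B) = δ ((a, 0, 0) : Tri A M B) := by
        have h := hadd ((a, 0, 0) : Tri A M B) ((0 : A), -(a • y), (0 : B))
        have e1 : ((a, 0, 0) : Tri A M B) + ((0 : A), -(a • y), (0 : B)) = (a, -(a • y), (0 : B)) := by
          simp [Prod.ext_iff, Prod.add_def]
        rw [e1, δM, add_zero] at h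
        exact h
      have h := key ((a, -(a • y), (0 : B)) : Tri A M B) ((0 : A), y, (1 : B))
        (by simp [Prod.ext_iff]) (by simp [Prod.ext_iff])
      have hY : δ (((0 : A), y, (1 : B)) : Tri A M B) = 0 := by
        have h' := hadd ((0 : A), y, (0 : B)) Q
        have e1 : (((0 : A), y, (0 : B)) : Tri A M B) + Q = ((0 : A), y, (1 : B)) := by
          simp [hQdef, Prod.ext_iff, Prod.add_def]
        rw [e1, δM, hδQ, add_zero] at h'
        exact h'
      rw [e, hY] at h
      simp [Prod.ext_iff, Prod.add_def, Prod.smul_def] at h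
      obtain ⟨h1, -⟩ := h
      rw [(δA0 a).1, (δA0 a).2] at h1
      simp only [smul_zero, add_zero, op_zero, zero_smul] at h1
      exact aux_nsmul_cancel hm0 h1
    exact Prod.ext ha (Prod.ext (δA0 a).1 (δA0 a).2)
  -- Step 5 : δ (0,0,b) has zero A and M components
  have δB0 : ∀ b : B, (δ (((0 : A), 0, b) : Tri A M B)).1 = 0 ∧ (δ (((0 : A), 0, b) : Tri A M B)).2.1 = 0 := by
    intro b
    have h := key (((0 : A), 0, b) : Tri A M B) P
      (by simp [hPdef, Prod.ext_iff]) (by simp [hPdef, Prod.ext_iff])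
    rw [hδP] at h
    simp [hPdef, Prod.ext_iff, Prod.add_def, Prod.smul_def] at h
    obtain ⟨h1, h2⟩ := h
    constructor
    · apply aux_ring_cancel₂ hmn0
      push_cast
      exact h1
    · exact aux_nsmul_cancel hn0 h2
  -- Step 6 : δ (0,0,b) = 0
  have δB : ∀ b : B, δ (((0 : A), 0, b) : Tri A M B) = 0 := by
    intro b
    have hb : (δ (((0 : A), 0, b) : Tri A M B)).2.2 = 0 := by
      apply hfaithR
      intro y
      have e : δ (((0 : A), -(op b • y), b) : Tri A M B) = δ (((0 : A), 0, b) : Tri A M B) := by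
        have h := hadd (((0 : A), 0, b) : Tri A M B) ((0 : A), -(op b • y), (0 : B))
        have e1 : (((0 : A), 0, b) : Tri A M B) + ((0 : A), -(op b • y), (0 : B))
            = ((0 : A), -(op b • y), b) := by
          simp [Prod.ext_iff, Prod.add_def]
        rw [e1, δM, add_zero] at h
        exact h
      have h := key (((0 : A), -(op b • y), b) : Tri A M B) (((1 : A), y, (0 : B)) : Tri A M B)
        (by simp [Prod.ext_iff]) (by simp [Prod.ext_iff])
      have hY : δ (((1 : A), y, (0 : B)) : Tri A M B) = 0 := by
        have h' := hadd P ((0 : A), y, (0 : B))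
        have e1 : P + (((0 : A), y, (0 : B)) : Tri A M B) = ((1 : A), y, (0 : B)) := by
          simp [hPdef, Prod.ext_iff, Prod.add_def]
        rw [e1, δM, hδP, zero_add] at h'
        exact h'
      rw [e, hY] at h
      simp [Prod.ext_iff, Prod.add_def, Prod.smul_def, (δB0 b).1, (δB0 b).2] at h
      exact aux_nsmul_cancel hn0 h
    exact Prod.ext (δB0 b).1 (Prod.ext (δB0 b).2 hb)
  -- conclusion
  rintro ⟨a, x, b⟩
  have e : ((a, x, b) : Tri A M B)
      = ((a, 0, 0) : Tri A M B) + ((0 : A), x, (0 : B)) + ((0 : A), 0, b) := by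
    simp [Prod.ext_iff, Prod.add_def]
  rw [e, hadd, hadd, δA, δM, δB, add_zero, add_zero]
end

section
/- Let A, B be unital algebras over ℂ and U = [[A, M],[N, B]] a generalized matrix algebra with m, n positive integers, m ≠ n. Let δ : U → U be an (m,n)-Jordan derivable mapping at zero with δ(1) = 0. Then δ vanishes on the off-diagonal corners: δ([[0, x],[0, 0]]) = 0 for all x ∈ M and δ([[0, 0],[y, 0]]) = 0 for all y ∈ N. -/
set_option linter.unusedSectionVars false

open MulOpposite

/-- A Morita context: bimodule pairings `Φ : M ⊗_B N → A` and `Ψ : N ⊗_A M → B`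
making `[[A, M],[N, B]]` an associative (generalized matrix) algebra. -/
class MoritaContext (A B : outParam Type*) (M N : Type*) [Ring A] [Ring B]
    [AddCommGroup M] [Module A M] [Module Bᵐᵒᵖ M] [SMulCommClass A Bᵐᵒᵖ M]
    [AddCommGroup N] [Module B N] [Module Aᵐᵒᵖ N] [SMulCommClass B Aᵐᵒᵖ N] where
  Φ : M →+ N →+ A
  Ψ : N →+ M →+ B
  Φ_smul_left : ∀ (a : A) (x : M) (y : N), Φ (a • x) y = a * Φ x y
  Φ_smul_right : ∀ (a : A) (x : M) (y : N), Φ x (op a • y) = Φ x y * a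
  Φ_balanced : ∀ (b : B) (x : M) (y : N), Φ (op b • x) y = Φ x (b • y)
  Ψ_smul_left : ∀ (b : B) (y : N) (x : M), Ψ (b • y) x = b * Ψ y x
  Ψ_smul_right : ∀ (b : B) (y : N) (x : M), Ψ y (op b • x) = Ψ y x * b
  Ψ_balanced : ∀ (a : A) (y : N) (x : M), Ψ (op a • y) x = Ψ y (a • x)
  assoc₁ : ∀ (x : M) (y : N) (x' : M), Φ x y • x' = op (Ψ y x') • x
  assoc₂ : ∀ (y : N) (x : M) (y' : N), Ψ y x • y' = op (Φ x y') • y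

/-- The generalized matrix algebra `[[A, M],[N, B]]`, realized on the underlying
set `A × M × N × B`. -/
abbrev GMA (A B M N : Type*) := A × M × N × B

namespace GMA

variable {A B M N : Type*} [Ring A] [Ring B]
  [AddCommGroup M] [Module A M] [Module Bᵐᵒᵖ M] [SMulCommClass A Bᵐᵒᵖ M]
  [AddCommGroup N] [Module B N] [Module Aᵐᵒᵖ N] [SMulCommClass B Aᵐᵒᵖ N]
  [MoritaContext A B M N]

/-- The pairing `M × N → A`. -/
abbrev φ (x : M) (y : N) : A := MoritaContext.Φ (B := B) x y

/-- The pairing `N × M → B`. -/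
abbrev ψ (y : N) (x : M) : B := MoritaContext.Ψ (A := A) y x

lemma φ_add_left (x x' : M) (y : N) : φ (A := A) (B := B) (x + x') y = φ x y + φ x' y := by
  simp [φ]

lemma φ_add_right (x : M) (y y' : N) : φ (A := A) (B := B) x (y + y') = φ x y + φ x y' := by
  simp [φ]

lemma ψ_add_left (y y' : N) (x : M) : ψ (A := A) (B := B) (y + y') x = ψ y x + ψ y' x := by
  simp [ψ]

lemma ψ_add_right (y : N) (x x' : M) : ψ (A := A) (B := B) y (x + x') = ψ y x + ψ y x' := by
  simp [ψ]

lemma φ_zero_left (y : N) : φ (A := A) (B := B) (0 : M) y = 0 := by simp [φ]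
lemma φ_zero_right (x : M) : φ (A := A) (B := B) x (0 : N) = 0 := by simp [φ]
lemma ψ_zero_left (x : M) : ψ (A := A) (B := B) (0 : N) x = 0 := by simp [ψ]
lemma ψ_zero_right (y : N) : ψ (A := A) (B := B) y (0 : M) = 0 := by simp [ψ]

lemma φ_smul_left (a : A) (x : M) (y : N) : φ (B := B) (a • x) y = a * φ x y :=
  MoritaContext.Φ_smul_left a x y
lemma φ_smul_right (a : A) (x : M) (y : N) : φ (B := B) x (op a • y) = φ x y * a :=
  MoritaContext.Φ_smul_right a x y
lemma φ_balanced (b : B) (x : M) (y : N) : φ (A := A) (op b • x) y = φ x (b • y) :=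
  MoritaContext.Φ_balanced b x y
lemma ψ_smul_left (b : B) (y : N) (x : M) : ψ (A := A) (b • y) x = b * ψ y x :=
  MoritaContext.Ψ_smul_left b y x
lemma ψ_smul_right (b : B) (y : N) (x : M) : ψ (A := A) y (op b • x) = ψ y x * b :=
  MoritaContext.Ψ_smul_right b y x
lemma ψ_balanced (a : A) (y : N) (x : M) : ψ (B := B) (op a • y) x = ψ y (a • x) :=
  MoritaContext.Ψ_balanced a y x
lemma assoc₁ (x : M) (y : N) (x' : M) : φ (B := B) x y • x' = op (ψ (A := A) y x') • x :=
  MoritaContext.assoc₁ x y x'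
lemma assoc₂ (y : N) (x : M) (y' : N) : ψ (A := A) y x • y' = op (φ (B := B) x y') • y :=
  MoritaContext.assoc₂ y x y'

instance : Mul (GMA A B M N) :=
  ⟨fun p q =>
    (p.1 * q.1 + φ p.2.1 q.2.2.1,
     p.1 • q.2.1 + op q.2.2.2 • p.2.1,
     op q.1 • p.2.2.1 + p.2.2.2 • q.2.2.1,
     p.2.2.2 * q.2.2.2 + ψ p.2.2.1 q.2.1)⟩

instance : One (GMA A B M N) := ⟨((1 : A), (0 : M), (0 : N), (1 : B))⟩

@[simp] lemma mul_def (p q : GMA A B M N) :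
    p * q =
      (p.1 * q.1 + φ p.2.1 q.2.2.1,
       p.1 • q.2.1 + op q.2.2.2 • p.2.1,
       op q.1 • p.2.2.1 + p.2.2.2 • q.2.2.1,
       p.2.2.2 * q.2.2.2 + ψ p.2.2.1 q.2.1) := rfl

@[simp] lemma one_def : (1 : GMA A B M N) = ((1 : A), (0 : M), (0 : N), (1 : B)) := rfl

instance instRing : Ring (GMA A B M N) :=
  { (inferInstance : AddCommGroup (GMA A B M N)) with
    left_distrib := by
      rintro ⟨a₁, x₁, y₁, b₁⟩ ⟨a₂, x₂, y₂, b₂⟩ ⟨a₃, x₃, y₃, b₃⟩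
      simp [Prod.ext_iff, Prod.add_def, mul_add, smul_add, add_smul,
        φ_add_right, ψ_add_right]
      refine ⟨by abel, by abel, by abel, by abel⟩
    right_distrib := by
      rintro ⟨a₁, x₁, y₁, b₁⟩ ⟨a₂, x₂, y₂, b₂⟩ ⟨a₃, x₃, y₃, b₃⟩
      simp [Prod.ext_iff, Prod.add_def, add_mul, smul_add, add_smul,
        φ_add_left, ψ_add_left]
      refine ⟨by abel, by abel, by abel, by abel⟩
    zero_mul := by
      rintro ⟨a, x, y, b⟩
      simp [Prod.ext_iff, φ_zero_left, ψ_zero_left]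
    mul_zero := by
      rintro ⟨a, x, y, b⟩
      simp [Prod.ext_iff, φ_zero_right, ψ_zero_right]
    mul_assoc := by
      rintro ⟨a₁, x₁, y₁, b₁⟩ ⟨a₂, x₂, y₂, b₂⟩ ⟨a₃, x₃, y₃, b₃⟩
      simp only [mul_def, Prod.ext_iff]
      refine ⟨?_, ?_, ?_, ?_⟩
      · simp [add_mul, mul_add, mul_assoc, φ_add_left, φ_add_right,
          φ_smul_left, φ_smul_right, φ_balanced]
        abel
      · simp [add_smul, smul_add, mul_smul, assoc₁]
        rw [smul_comm a₁ (op b₃) x₂]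
        abel
      · simp [add_smul, smul_add, mul_smul, assoc₂]
        rw [smul_comm b₁ (op a₃) y₂]
        abel
      · simp [add_mul, mul_add, mul_assoc, ψ_add_left, ψ_add_right,
          ψ_smul_left, ψ_smul_right, ψ_balanced]
        abel
    one_mul := by
      rintro ⟨a, x, y, b⟩
      simp [Prod.ext_iff, φ_zero_left, ψ_zero_left]
    mul_one := by
      rintro ⟨a, x, y, b⟩
      simp [Prod.ext_iff, φ_zero_right, ψ_zero_right]
    }

end GMA

private lemma aux_nsmul_cancel_s13 {V : Type*} [AddCommGroup V] [Module ℂ V]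
    {j k : ℕ} (hjk : j ≠ k) {v : V} (hv : j • v = k • v) : v = 0 := by
  have h : ((j : ℂ) - (k : ℂ)) • v = 0 := by
    rw [sub_smul, Nat.cast_smul_eq_nsmul, Nat.cast_smul_eq_nsmul, hv, sub_self]
  rcases smul_eq_zero.mp h with h' | h'
  · have : (j : ℂ) = (k : ℂ) := sub_eq_zero.mp h'
    exact absurd (by exact_mod_cast this) hjk
  · exact h'

/-- An `(m,n)`-Jordan derivable mapping at zero (`0 < m`,
`0 < n`, `m ≠ n`) on a generalized matrix algebra `U = [[A, M],[N, B]]` with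
`δ 1 = 0` vanishes on the off-diagonal corners. -/
theorem mn_jordan_derivable_at_zero_generalized_matrix_corners
    {A B M N : Type*} [Ring A] [Algebra ℂ A] [Ring B] [Algebra ℂ B]
    [AddCommGroup M] [Module ℂ M] [Module A M] [Module Bᵐᵒᵖ M]
    [SMulCommClass A Bᵐᵒᵖ M]
    [AddCommGroup N] [Module ℂ N] [Module B N] [Module Aᵐᵒᵖ N]
    [SMulCommClass B Aᵐᵒᵖ N]
    [MoritaContext A B M N]
    (m n : ℕ) (hm : 0 < m) (hn : 0 < n) (hmn : m ≠ n)
    (δ : GMA A B M N → GMA A B M N)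
    (hadd : ∀ p q : GMA A B M N, δ (p + q) = δ p + δ q)
    (hδ1 : δ 1 = 0)
    (hzero : ∀ X Y : GMA A B M N, X * Y = 0 → Y * X = 0 →
      (m + n) • δ (X * Y + Y * X) =
        (2 * m) • (δ X * Y) + (2 * m) • (δ Y * X)
          + (2 * n) • (X * δ Y) + (2 * n) • (Y * δ X)) :
    (∀ x : M, δ ((0 : A), x, (0 : N), (0 : B)) = 0) ∧
      (∀ y : N, δ ((0 : A), (0 : M), y, (0 : B)) = 0) := by
  classical
  have δ0 : δ 0 = 0 := by
    have h := hadd 0 0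
    rw [add_zero] at h
    exact (left_eq_add.mp h)
  have δneg : ∀ p : GMA A B M N, δ (-p) = - δ p := by
    intro p
    have h := hadd p (-p)
    rw [add_neg_cancel, δ0] at h
    exact (eq_neg_of_add_eq_zero_right h.symm)
  set e : GMA A B M N := ((1 : A), (0 : M), (0 : N), (0 : B)) with he
  set f : GMA A B M N := ((0 : A), (0 : M), (0 : N), (1 : B)) with hf
  have hef : e * f = 0 := by
    simp [he, hf, Prod.ext_iff]
  have hfe : f * e = 0 := by
    simp [he, hf, Prod.ext_iff]
  have hef1 : e + f = 1 := by
    simp [he, hf, Prod.ext_iff]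
  have δf : δ f = - δ e := by
    have h := hadd e f
    rw [hef1, hδ1] at h
    exact eq_neg_of_add_eq_zero_right h.symm
  -- First step: δ e = 0
  have hδe : δ e = 0 := by
    have eq1 := hzero e f hef hfe
    rw [hef, hfe, add_zero, δ0, smul_zero, δf] at eq1
    rcases hE : δ e with ⟨a, p, q, b⟩
    rw [hE] at eq1
    simp only [he, hf, GMA.mul_def, Prod.neg_mk, Prod.smul_mk, Prod.mk_add_mk,
      Prod.mk.injEq, Prod.ext_iff, Prod.fst_zero, Prod.snd_zero, map_zero,
      AddMonoidHom.zero_apply, mul_zero, zero_mul, mul_one, one_mul, smul_zero,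
      zero_smul, one_smul, MulOpposite.op_one, MulOpposite.op_zero, add_zero,
      zero_add, neg_mul, mul_neg, smul_neg, neg_smul, neg_neg, neg_zero,
      GMA.φ_zero_left, GMA.φ_zero_right, GMA.ψ_zero_left, GMA.ψ_zero_right] at eq1
    obtain ⟨h1, h2, h3, h4⟩ := eq1
    have ha : a = 0 := aux_nsmul_cancel_s13 (j := 2*m + 2*n) (k := 0) (by omega)
      (by linear_combination (norm := module) h1)
    have hp : p = 0 := aux_nsmul_cancel_s13 (j := 2*m) (k := 2*n) (by omega)
      (by linear_combination (norm := module) -h2)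
    have hq : q = 0 := aux_nsmul_cancel_s13 (j := 2*n) (k := 2*m) (by omega)
      (by linear_combination (norm := module) -h3)
    have hb : b = 0 := aux_nsmul_cancel_s13 (j := 2*m + 2*n) (k := 0) (by omega)
      (by linear_combination (norm := module) -h4)
    simp [ha, hp, hq, hb, Prod.ext_iff]
  have hδf : δ f = 0 := by rw [δf, hδe, neg_zero]
  constructor
  · intro x
    set t : GMA A B M N := ((0 : A), x, (0 : N), (0 : B)) with ht
    set X : GMA A B M N := ((1 : A), x, (0 : N), (0 : B)) with hX
    set Y : GMA A B M N := ((0 : A), -x, (0 : N), (1 : B)) with hY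
    have hXY : X * Y = 0 := by
      simp [hX, hY, Prod.ext_iff, GMA.φ_zero_right, GMA.ψ_zero_left]
    have hYX : Y * X = 0 := by
      simp [hX, hY, Prod.ext_iff, GMA.φ_zero_left, GMA.ψ_zero_left, GMA.ψ_zero_right]
    have hXe : X = e + t := by simp [hX, he, ht, Prod.ext_iff]
    have hYf : Y = f + (-t) := by simp [hY, hf, ht, Prod.ext_iff]
    have hδX : δ X = δ t := by rw [hXe, hadd, hδe, zero_add]
    have hδY : δ Y = -δ t := by rw [hYf, hadd, hδf, δneg, zero_add]
    have eq2 := hzero X Y hXY hYX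
    rw [hXY, hYX, add_zero, δ0, smul_zero, hδX, hδY] at eq2
    rcases hD : δ t with ⟨a, p, q, b⟩
    rw [hD] at eq2
    simp only [hX, hY, GMA.mul_def, Prod.neg_mk, Prod.smul_mk, Prod.mk_add_mk,
      Prod.mk.injEq, Prod.ext_iff, Prod.fst_zero, Prod.snd_zero, map_zero,
      AddMonoidHom.zero_apply, mul_zero, zero_mul, mul_one, one_mul, smul_zero,
      zero_smul, one_smul, MulOpposite.op_one, MulOpposite.op_zero, add_zero,
      zero_add, neg_mul, mul_neg, smul_neg, neg_smul, neg_neg, neg_zero,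
      GMA.φ_zero_left, GMA.φ_zero_right, GMA.ψ_zero_left, GMA.ψ_zero_right,
      map_neg, AddMonoidHom.neg_apply] at eq2
    obtain ⟨h1, h2, h3, h4⟩ := eq2
    have hq : q = 0 := aux_nsmul_cancel_s13 (j := 2*n) (k := 2*m) (by omega)
      (by linear_combination (norm := module) -h3)
    rw [hq] at h1 h4
    simp only [map_zero, neg_zero, AddMonoidHom.zero_apply, zero_smul, smul_zero,
      GMA.φ_zero_right, GMA.ψ_zero_left, map_neg, AddMonoidHom.neg_apply,
      add_zero, zero_add] at h1 h4
    have ha : a = 0 := aux_nsmul_cancel_s13 (j := 2*m + 2*n) (k := 0) (by omega)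
      (by linear_combination (norm := module) h1)
    have hb : b = 0 := aux_nsmul_cancel_s13 (j := 2*m + 2*n) (k := 0) (by omega)
      (by linear_combination (norm := module) -h4)
    rw [ha, hb] at h2
    simp only [zero_smul, smul_zero, neg_zero, MulOpposite.op_zero, add_zero,
      zero_add] at h2
    have hp : p = 0 := aux_nsmul_cancel_s13 (j := 2*m) (k := 2*n) (by omega)
      (by linear_combination (norm := module) -h2)
    simp [ha, hp, hq, hb, Prod.ext_iff]
  · intro y
    set t : GMA A B M N := ((0 : A), (0 : M), y, (0 : B)) with ht
    set X : GMA A B M N := ((0 : A), (0 : M), y, (1 : B)) with hX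
    set Y : GMA A B M N := ((1 : A), (0 : M), -y, (0 : B)) with hY
    have hXY : X * Y = 0 := by
      simp [hX, hY, Prod.ext_iff, GMA.φ_zero_left, GMA.ψ_zero_right]
    have hYX : Y * X = 0 := by
      simp [hX, hY, Prod.ext_iff, GMA.φ_zero_left, GMA.ψ_zero_left, GMA.ψ_zero_right]
    have hXf : X = f + t := by simp [hX, hf, ht, Prod.ext_iff]
    have hYe : Y = e + (-t) := by simp [hY, he, ht, Prod.ext_iff]
    have hδX : δ X = δ t := by rw [hXf, hadd, hδf, zero_add]
    have hδY : δ Y = -δ t := by rw [hYe, hadd, hδe, δneg, zero_add]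
    have eq3 := hzero X Y hXY hYX
    rw [hXY, hYX, add_zero, δ0, smul_zero, hδX, hδY] at eq3
    rcases hD : δ t with ⟨a, p, q, b⟩
    rw [hD] at eq3
    simp only [hX, hY, GMA.mul_def, Prod.neg_mk, Prod.smul_mk, Prod.mk_add_mk,
      Prod.mk.injEq, Prod.ext_iff, Prod.fst_zero, Prod.snd_zero, map_zero,
      AddMonoidHom.zero_apply, mul_zero, zero_mul, mul_one, one_mul, smul_zero,
      zero_smul, one_smul, MulOpposite.op_one, MulOpposite.op_zero, add_zero,
      zero_add, neg_mul, mul_neg, smul_neg, neg_smul, neg_neg, neg_zero,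
      GMA.φ_zero_left, GMA.φ_zero_right, GMA.ψ_zero_left, GMA.ψ_zero_right,
      map_neg, AddMonoidHom.neg_apply] at eq3
    obtain ⟨h1, h2, h3, h4⟩ := eq3
    have hp : p = 0 := aux_nsmul_cancel_s13 (j := 2*m) (k := 2*n) (by omega)
      (by linear_combination (norm := module) h2)
    rw [hp] at h1 h4
    simp only [map_zero, neg_zero, AddMonoidHom.zero_apply, zero_smul, smul_zero,
      GMA.φ_zero_left, GMA.ψ_zero_right, map_neg, AddMonoidHom.neg_apply,
      add_zero, zero_add] at h1 h4
    have ha : a = 0 := aux_nsmul_cancel_s13 (j := 2*m + 2*n) (k := 0) (by omega)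
      (by linear_combination (norm := module) -h1)
    have hb : b = 0 := aux_nsmul_cancel_s13 (j := 2*m + 2*n) (k := 0) (by omega)
      (by linear_combination (norm := module) h4)
    rw [ha, hb] at h3
    simp only [zero_smul, smul_zero, neg_zero, MulOpposite.op_zero, add_zero,
      zero_add] at h3
    have hq : q = 0 := aux_nsmul_cancel_s13 (j := 2*m) (k := 2*n) (by omega)
      (by linear_combination (norm := module) -h3)
    simp [ha, hp, hq, hb, Prod.ext_iff]
end

section
/- Let A be a unital algebra over ℂ, M a unital A-bimodule, and m, n positive integers with m ≠ n. Let δ : A → M be an (m,n)-Jordan derivable mapping at zero with δ(1) = 0, let P be an idempotent in A, and let A ∈ A. Then δ(PA) = δ(PAP) and δ(AP) = δ(PAP). -/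
open MulOpposite

section Aux

variable {A M : Type*} [Ring A] [Algebra ℂ A]
    [AddCommGroup M] [Module ℂ M] [Module A M] [Module Aᵐᵒᵖ M]
    [SMulCommClass A Aᵐᵒᵖ M]

lemma mn_cancel_nat {k : ℕ} (hk : k ≠ 0) {y : M} (h : k • y = 0) : y = 0 := by
  have h' : ((k : ℂ)) • y = 0 := by rw [Nat.cast_smul_eq_nsmul]; exact h
  rcases smul_eq_zero.mp h' with h'' | h''
  · exact absurd (by exact_mod_cast h'') hk
  · exact h''

lemma mn_cancel_eq {j k : ℕ} (hjk : j ≠ k) {y : M} (h : j • y = k • y) : y = 0 := by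
  have h' : ((j : ℂ) - (k : ℂ)) • y = 0 := by
    rw [sub_smul, Nat.cast_smul_eq_nsmul, Nat.cast_smul_eq_nsmul, h, sub_self]
  rcases smul_eq_zero.mp h' with h'' | h''
  · exact absurd (by exact_mod_cast sub_eq_zero.mp h'') hjk
  · exact h''

lemma mn_killer (m n : ℕ) (hm : 0 < m) (hn : 0 < n) (hmn : m ≠ n)
    (P Q : A) (hP : P * P = P) (hQ : Q * Q = Q)
    (hPQ : P * Q = 0) (hQP : Q * P = 0) (hPQ1 : P + Q = 1)
    (x : M)
    (h : (0:M) = (2*m) • (op Q • x) + -((2*m) • (op P • x))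
        + -((2*n) • (P • x)) + (2*n) • (Q • x)) :
    x = 0 := by
  have n1 : ∀ (a b c : A) (k : ℕ) (y : M),
      a • (op b • (k • (op c • y))) = k • (a • (op (c * b) • y)) := by
    intro a b c k y
    rw [smul_comm (op b) k, smul_comm a k, smul_smul (op b) (op c), ← op_mul]
  have n2 : ∀ (a b c : A) (k : ℕ) (y : M),
      a • (op b • (k • (c • y))) = k • ((a * c) • (op b • y)) := by
    intro a b c k y
    rw [smul_comm (op b) k, smul_comm a k, ← smul_comm c (op b) y, smul_smul a c]
  -- component PP
  have c11 : P • (op P • x) = 0 := by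
    have h1 := congrArg (fun y : M => P • (op P • y)) h
    simp only [smul_add, smul_neg, smul_zero, n1, n2, hP, hPQ, hQP] at h1
    simp only [op_zero, zero_smul, smul_zero, zero_mul, mul_zero, neg_zero,
      zero_add, add_zero] at h1
    rw [← neg_add] at h1
    have h2 : (2*m) • (P • (op P • x)) + (2*n) • (P • (op P • x)) = 0 :=
      neg_eq_zero.mp h1.symm
    refine mn_cancel_nat (k := 2*m + 2*n) (by omega) ?_
    rw [add_smul]; exact h2
  -- component PQ
  have c12 : P • (op Q • x) = 0 := by
    have h1 := congrArg (fun y : M => P • (op Q • y)) h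
    simp only [smul_add, smul_neg, smul_zero, n1, n2, hQ, hP, hPQ, hQP] at h1
    simp only [op_zero, zero_smul, smul_zero, zero_mul, mul_zero, neg_zero,
      zero_add, add_zero] at h1
    rw [← sub_eq_add_neg] at h1
    exact mn_cancel_eq (j := 2*m) (k := 2*n) (by omega) (sub_eq_zero.mp h1.symm)
  -- component QP
  have c21 : Q • (op P • x) = 0 := by
    have h1 := congrArg (fun y : M => Q • (op P • y)) h
    simp only [smul_add, smul_neg, smul_zero, n1, n2, hQ, hP, hPQ, hQP] at h1
    simp only [op_zero, zero_smul, smul_zero, zero_mul, mul_zero, neg_zero,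
      zero_add, add_zero] at h1
    rw [← sub_eq_neg_add] at h1
    exact mn_cancel_eq (j := 2*n) (k := 2*m) (by omega) (sub_eq_zero.mp h1.symm)
  -- component QQ
  have c22 : Q • (op Q • x) = 0 := by
    have h1 := congrArg (fun y : M => Q • (op Q • y)) h
    simp only [smul_add, smul_neg, smul_zero, n1, n2, hQ, hP, hPQ, hQP] at h1
    simp only [op_zero, zero_smul, smul_zero, zero_mul, mul_zero, neg_zero,
      zero_add, add_zero] at h1
    refine mn_cancel_nat (k := 2*m + 2*n) (by omega) ?_
    rw [add_smul]; exact h1.symm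
  have hx : x = P • (op P • x) + P • (op Q • x) + (Q • (op P • x) + Q • (op Q • x)) := by
    have h1 : op P • x + op Q • x = x := by
      rw [← add_smul, ← op_add, hPQ1, op_one, one_smul]
    have h2 : P • x + Q • x = x := by rw [← add_smul, hPQ1, one_smul]
    calc x = P • x + Q • x := h2.symm
    _ = P • (op P • x + op Q • x) + Q • (op P • x + op Q • x) := by rw [h1]
    _ = _ := by rw [smul_add, smul_add]
  rw [c11, c12, c21, c22] at hx
  simpa using hx

end Aux

/-- `δ(PA) = δ(PAP)` and `δ(AP) = δ(PAP)` for every idempotent `P`. -/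
theorem mn_jordan_derivable_at_zero_PAP
    {A M : Type*} [Ring A] [Algebra ℂ A]
    [AddCommGroup M] [Module ℂ M] [Module A M] [Module Aᵐᵒᵖ M]
    [SMulCommClass A Aᵐᵒᵖ M]
    (m n : ℕ) (hm : 0 < m) (hn : 0 < n) (hmn : m ≠ n)
    (δ : A → M) (hadd : ∀ a b : A, δ (a + b) = δ a + δ b)
    (hδ1 : δ 1 = 0)
    (hzero : ∀ X Y : A, X * Y = 0 → Y * X = 0 →
      (m + n) • δ (X * Y + Y * X) =
        (2 * m) • (op Y • δ X) + (2 * m) • (op X • δ Y)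
          + (2 * n) • (X • δ Y) + (2 * n) • (Y • δ X))
    (P : A) (hP : P * P = P) (a : A) :
    δ (P * a) = δ (P * a * P) ∧ δ (a * P) = δ (P * a * P) := by
  have h0 : δ 0 = 0 := by
    have := hadd 0 0
    rw [add_zero] at this
    exact (right_eq_add.mp this)
  have hneg : ∀ b : A, δ (-b) = - δ b := by
    intro b
    have := hadd b (-b)
    rw [add_neg_cancel, h0] at this
    exact (neg_eq_of_add_eq_zero_right this.symm).symm
  set Q : A := 1 - P with hQdef
  have hQ : Q * Q = Q := by
    simp [hQdef, sub_mul, mul_sub, hP]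
  have hPQ : P * Q = 0 := by rw [hQdef, mul_sub, mul_one, hP, sub_self]
  have hQP : Q * P = 0 := by rw [hQdef, sub_mul, one_mul, hP, sub_self]
  have hPQ1 : P + Q = 1 := by simp [hQdef]
  have hzero' : ∀ X Y : A, X * Y = 0 → Y * X = 0 →
      (0 : M) = (2 * m) • (op Y • δ X) + (2 * m) • (op X • δ Y)
          + (2 * n) • (X • δ Y) + (2 * n) • (Y • δ X) := by
    intro X Y h1 h2
    have := hzero X Y h1 h2
    rwa [h1, h2, add_zero, h0, smul_zero] at this
  have hδQ : δ Q = - δ P := by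
    have := hadd P Q
    rw [hPQ1, hδ1] at this
    exact (neg_eq_of_add_eq_zero_right this.symm).symm
  -- Step 1 : δ P = 0
  have hδP : δ P = 0 := by
    have e1 := hzero' P Q hPQ hQP
    rw [hδQ] at e1
    simp only [smul_neg] at e1
    exact mn_killer m n hm hn hmn P Q hP hQ hPQ hQP hPQ1 (δ P) e1
  have hδQ0 : δ Q = 0 := by rw [hδQ, hδP, neg_zero]
  -- Step 2 : `δ (R b S) = 0` for complementary idempotents R S killed by δ
  have key : ∀ (R S : A), R * R = R → S * S = S → R * S = 0 → S * R = 0 → R + S = 1 →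
      δ R = 0 → δ S = 0 → ∀ b : A, δ (R * b * S) = 0 := by
    intro R S hR hS hRS hSR hRS1 hδR hδS b
    -- properties of s := R * b * S
    have key0 : ∀ s : A, R * s = s → s * S = s → s * R = 0 → S * s = 0 → s * s = 0 →
        δ s = 0 := by
      intro s hRs hsS hsR hSs hss
      have pf1 : (R + s) * (S - s) = 0 := by
        simp only [add_mul, sub_mul, mul_add, mul_sub, hRS, hSR, hRs, hsS, hsR, hSs, hss]
        abel
      have pf2 : (S - s) * (R + s) = 0 := by
        simp only [add_mul, sub_mul, mul_add, mul_sub, hRS, hSR, hRs, hsS, hsR, hSs, hss]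
        abel
      have pf3 : (R + (s + s)) * (S - (s + s)) = 0 := by
        simp only [add_mul, sub_mul, mul_add, mul_sub, hRS, hSR, hRs, hsS, hsR, hSs, hss]
        abel
      have pf4 : (S - (s + s)) * (R + (s + s)) = 0 := by
        simp only [add_mul, sub_mul, mul_add, mul_sub, hRS, hSR, hRs, hsS, hsR, hSs, hss]
        abel
      have hδX1 : δ (R + s) = δ s := by rw [hadd, hδR, zero_add]
      have hδY1 : δ (S - s) = - δ s := by
        rw [sub_eq_add_neg, hadd, hneg, hδS, zero_add]
      have hδX2 : δ (R + (s + s)) = δ s + δ s := by rw [hadd, hadd, hδR, zero_add]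
      have hδY2 : δ (S - (s + s)) = -(δ s + δ s) := by
        rw [sub_eq_add_neg, hadd, hneg, hadd, hδS, zero_add]
      have e2 := hzero' (R + s) (S - s) pf1 pf2
      rw [hδX1, hδY1] at e2
      have e3 := hzero' (R + (s + s)) (S - (s + s)) pf3 pf4
      rw [hδX2, hδY2] at e3
      simp only [op_sub, op_add, sub_smul, add_smul, smul_neg, smul_sub, smul_add,
        neg_add, neg_sub, neg_neg, smul_zero] at e2 e3
      -- reduce to the linear part
      have hLin : (0:M) = (2*m) • (op S • δ s) + -((2*m) • (op R • δ s))
          + -((2*n) • (R • δ s)) + (2*n) • (S • δ s) := by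
        generalize op S • δ s = y1 at e2 e3 ⊢
        generalize op R • δ s = y2 at e2 e3 ⊢
        generalize op s • δ s = y5 at e2 e3 ⊢
        generalize (S : A) • δ s = y3 at e2 e3 ⊢
        generalize (R : A) • δ s = y4 at e2 e3 ⊢
        generalize (s : A) • δ s = y6 at e2 e3 ⊢
        linear_combination (norm := module) (2:ℂ) • e2 - ((2:ℂ))⁻¹ • e3
      exact mn_killer m n hm hn hmn R S hR hS hRS hSR hRS1 (δ s) hLin
    apply key0
    · rw [← mul_assoc, ← mul_assoc, hR]
    · rw [mul_assoc, mul_assoc, hS, ← mul_assoc]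
    · rw [mul_assoc, mul_assoc, hSR, mul_zero, mul_zero]
    · rw [← mul_assoc, ← mul_assoc, hSR, zero_mul, zero_mul]
    · rw [mul_assoc (R*b) S (R*b*S), ← mul_assoc S (R*b) S, ← mul_assoc S R b,
        hSR, zero_mul, zero_mul, mul_zero]
  have kPQ : δ (P * a * Q) = 0 := key P Q hP hQ hPQ hQP hPQ1 hδP hδQ0 a
  have kQP : δ (Q * a * P) = 0 := by
    apply key Q P hQ hP hQP hPQ _ hδQ0 hδP a
    rw [← hPQ1]; abel
  constructor
  · have h5 : P * a = P * a * P + P * a * Q := by rw [← mul_add, hPQ1, mul_one]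
    conv_lhs => rw [h5]
    rw [hadd, kPQ, add_zero]
  · have h5 : a * P = P * (a * P) + Q * (a * P) := by
      rw [← add_mul, hPQ1, one_mul]
    conv_lhs => rw [h5]
    rw [hadd, show P * (a * P) = P * a * P from (mul_assoc P a P).symm,
      show Q * (a * P) = Q * a * P from (mul_assoc Q a P).symm, kQP, add_zero]
end
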